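/- arXiv:2312.16160 — 6 statements merged into one kernel-verified Lean document; each statement's English description precedes it below -/
import Mathlib

section
/- Assume Z is 𝒢-distributionally invariant (ρ(G)Z =_d Z) and V : 𝒵 → 𝒵̃ is 𝒢-distributionally equivariant (V(ρ(G)Z) =_d ρ̃(G)V(Z)). Let ψ : 𝒵̃ → ℝ be measurable and let t : 𝒵̃ → ℝ ∪ {+∞} be measurable and deterministically 𝒢-invariant, i.e., t(ρ̃(g)z̃) = t(z̃) for all g ∈ 𝒢 and z̃ ∈ 𝒵̃. Then P(ψ(V(Z)) ≤ t(V(Z))) = P(ψ(ρ̃(G)V(Z)) ≤ t(V(Z))), where the right-hand probability is over the independent pair (G, Z) with G ~ U. -/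
open MeasureTheory ProbabilityTheory

/-! Invariance of `Z` and equivariance of `V` chain to `V(Z) =_d V(ρ(G)Z) =_d ρ̃(G)V(Z)`.
Since `t` is invariant, `{ψ(ρ̃(G)V(Z)) ≤ t(V(Z))}` is the preimage of `{ψ ≤ t}` under
`ρ̃(G)V(Z)`, just as `{ψ(V(Z)) ≤ t(V(Z))}` is its preimage under `V(Z)`. -/

theorem ProbabilityTheory.IdentDistrib.measure_le_eq_of_invariant {Ω 𝒢 X α : Type*} [MeasurableSpace Ω]
    [MeasurableSpace X] [TopologicalSpace α] [MeasurableSpace α] [OpensMeasurableSpace α]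
    [PartialOrder α] [OrderClosedTopology α] [SecondCountableTopology α]
    {P : Measure Ω} {ρ : 𝒢 → X → X} {Y : Ω → X} {G : Ω → 𝒢}
    (hY : IdentDistrib Y (fun ω => ρ (G ω) (Y ω)) P P) {f t : X → α}
    (hf : Measurable f) (ht : Measurable t) (htinv : ∀ g x, t (ρ g x) = t x) :
    P {ω | f (Y ω) ≤ t (Y ω)} = P {ω | f (ρ (G ω) (Y ω)) ≤ t (Y ω)} := by
  simpa [htinv] using hY.measure_mem_eq (measurableSet_le hf ht)

theorem stmt3_general
    {Ω 𝒢 𝒵 𝒵t : Type*} [MeasurableSpace Ω] [MeasurableSpace 𝒢] [MeasurableSpace 𝒵]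
    [MeasurableSpace 𝒵t]
    (P : Measure Ω)
    (ρ : 𝒢 → 𝒵 → 𝒵)
    (hρ_meas : Measurable (fun p : 𝒢 × 𝒵 => ρ p.1 p.2))
    (ρt : 𝒢 → 𝒵t → 𝒵t)
    (hρt_meas : Measurable (fun p : 𝒢 × 𝒵t => ρt p.1 p.2))
    (V : 𝒵 → 𝒵t) (hV : Measurable V)
    (ψ : 𝒵t → ℝ) (hψ : Measurable ψ)
    (t : 𝒵t → EReal) (ht : Measurable t)
    (htinv : ∀ (g : 𝒢) (z : 𝒵t), t (ρt g z) = t z)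
    (Zv : Ω → 𝒵) (Gv : Ω → 𝒢) (hZ : Measurable Zv) (hG : Measurable Gv)
    (hinv : Measure.map (fun ω => ρ (Gv ω) (Zv ω)) P = Measure.map Zv P)
    (hequiv : Measure.map (fun ω => V (ρ (Gv ω) (Zv ω))) P
        = Measure.map (fun ω => ρt (Gv ω) (V (Zv ω))) P) :
    P {ω | (ψ (V (Zv ω)) : EReal) ≤ t (V (Zv ω))}
      = P {ω | (ψ (ρt (Gv ω) (V (Zv ω))) : EReal) ≤ t (V (Zv ω))} := by
  have hρZ : Measurable fun ω => ρ (Gv ω) (Zv ω) := hρ_meas.comp (hG.prodMk hZ)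
  have hρtVZ : Measurable fun ω => ρt (Gv ω) (V (Zv ω)) :=
    hρt_meas.comp (hG.prodMk (hV.comp hZ))
  have hZ_invariant : IdentDistrib (fun ω => ρ (Gv ω) (Zv ω)) Zv P P :=
    ⟨hρZ.aemeasurable, hZ.aemeasurable, hinv⟩
  have hV_equivariant : IdentDistrib (fun ω => V (ρ (Gv ω) (Zv ω)))
      (fun ω => ρt (Gv ω) (V (Zv ω))) P P :=
    ⟨(hV.comp hρZ).aemeasurable, hρtVZ.aemeasurable, hequiv⟩
  exact ((hZ_invariant.symm.comp hV).trans hV_equivariant).measure_le_eq_of_invariant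
    (measurable_coe_real_ereal.comp hψ) ht htinv

/-- Under distributional invariance of `Z` and distributional equivariance of
`V`, for any measurable `ψ : 𝒵̃ → ℝ` and any measurable deterministically 𝒢-invariant
threshold `t : 𝒵̃ → ℝ ∪ {+∞}` (modeled as `EReal`-valued),
`P(ψ(V(Z)) ≤ t(V(Z))) = P(ψ(ρ̃(G)V(Z)) ≤ t(V(Z)))`. -/
theorem stmt3
    {Ω 𝒢 𝒵 𝒵t : Type*} [MeasurableSpace Ω] [MeasurableSpace 𝒢] [MeasurableSpace 𝒵]
    [MeasurableSpace 𝒵t]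
    [Group 𝒢] [TopologicalSpace 𝒢] [IsTopologicalGroup 𝒢] [CompactSpace 𝒢] [T2Space 𝒢]
    [BorelSpace 𝒢]
    (P : Measure Ω) [IsProbabilityMeasure P]
    (U : Measure 𝒢) [IsProbabilityMeasure U]
    (hU : ∀ g : 𝒢, Measure.map (fun h => g * h) U = U)
    (ρ : 𝒢 → 𝒵 → 𝒵)
    (hρ_one : ρ 1 = id)
    (hρ_mul : ∀ g g' : 𝒢, ρ (g * g') = ρ g ∘ ρ g')
    (hρ_meas : Measurable (fun p : 𝒢 × 𝒵 => ρ p.1 p.2))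
    (ρt : 𝒢 → 𝒵t → 𝒵t)
    (hρt_one : ρt 1 = id)
    (hρt_mul : ∀ g g' : 𝒢, ρt (g * g') = ρt g ∘ ρt g')
    (hρt_meas : Measurable (fun p : 𝒢 × 𝒵t => ρt p.1 p.2))
    (V : 𝒵 → 𝒵t) (hV : Measurable V)
    (ψ : 𝒵t → ℝ) (hψ : Measurable ψ)
    (hψρ : Measurable (fun p : 𝒢 × 𝒵t => ψ (ρt p.1 p.2)))
    (t : 𝒵t → EReal) (ht : Measurable t)
    (htinv : ∀ (g : 𝒢) (z : 𝒵t), t (ρt g z) = t z)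
    (Zv : Ω → 𝒵) (Gv : Ω → 𝒢) (hZ : Measurable Zv) (hG : Measurable Gv)
    (hGlaw : Measure.map Gv P = U)
    (hindep : IndepFun Gv Zv P)
    (hinv : Measure.map (fun ω => ρ (Gv ω) (Zv ω)) P = Measure.map Zv P)
    (hequiv : Measure.map (fun ω => V (ρ (Gv ω) (Zv ω))) P
        = Measure.map (fun ω => ρt (Gv ω) (V (Zv ω))) P) :
    P {ω | (ψ (V (Zv ω)) : EReal) ≤ t (V (Zv ω))}
      = P {ω | (ψ (ρt (Gv ω) (V (Zv ω))) : EReal) ≤ t (V (Zv ω))} :=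
  stmt3_general P ρ hρ_meas ρt hρt_meas V hV ψ hψ t ht htinv Zv Gv hZ hG hinv hequiv
end

section
/- (Coverage lower bound of SymmPI.) Assume Z is 𝒢-distributionally invariant (ρ(G)Z =_d Z) and V : 𝒵 → 𝒵̃ is 𝒢-distributionally equivariant (V(ρ(G)Z) =_d ρ̃(G)V(Z)). Then P(ψ(V(Z)) ≤ t_{V(Z)}) ≥ 1 − α; equivalently, the SymmPI prediction set T(o(Z)) = {z ∈ 𝒵 : ψ(V(z)) ≤ t_{V(z)}, o(z) = o(Z)} contains Z with probability at least 1 − α for any observation function o : 𝒵 → 𝒪. -/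
/-!
The law of `ψ(ρ̃(G)z̃)` depends only on the orbit of `z̃`. Indeed, the image of a left-invariant
probability measure `U` under `g ↦ ρ̃(g)z̃` equals its image under `g ↦ ρ̃(g⁻¹)z̃` (compute the
`U ⊗ U`-measure of `{(k, h) | ρ̃(k⁻¹)ρ̃(h)z̃ ∈ A}` by Fubini in both orders), and the latter is
visibly unchanged when `z̃` moves along its orbit. Hence `t` is constant on orbits. Since `V(Z)`
has the law of `ρ̃(G)V(Z)` with `G` independent of `V(Z)`, the coverage probability is the
average over `w` of `U{g : ψ(ρ̃(g)w) ≤ t_w}`, and each of these is at least `1 − α` by right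
continuity of the CDF at the quantile `t_w`.
-/

open MeasureTheory ProbabilityTheory

/-- CDF of `ψ(ρ̃(G)z̃)` for `G ~ U`, evaluated at `x ∈ ℝ`. -/
noncomputable def symmPIcdf {𝒢 𝒵t : Type*} [MeasurableSpace 𝒢] (U : Measure 𝒢)
    (ρt : 𝒢 → 𝒵t → 𝒵t) (ψ : 𝒵t → ℝ) (z : 𝒵t) (x : ℝ) : ℝ :=
  (U {g | ψ (ρt g z) ≤ x}).toReal

/-- The SymmPI threshold `t_{z̃} := inf{x ∈ ℝ : F_{z̃}(x) ≥ 1−α}` (equal to `+∞` if this set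
is empty), as an extended real number. -/
noncomputable def symmPIthr {𝒢 𝒵t : Type*} [MeasurableSpace 𝒢] (U : Measure 𝒢)
    (ρt : 𝒢 → 𝒵t → 𝒵t) (ψ : 𝒵t → ℝ) (α : ℝ) (z : 𝒵t) : EReal :=
  sInf ((fun x : ℝ => (x : EReal)) '' {x : ℝ | 1 - α ≤ symmPIcdf U ρt ψ z x})

open Filter Function Set

noncomputable def lowerQuantile (ν : Measure ℝ) (p : ℝ) : EReal :=
  sInf ((fun x : ℝ => (x : EReal)) '' {x : ℝ | p ≤ cdf ν x})

theorem ofReal_le_measure_le_lowerQuantile (ν : Measure ℝ) [IsProbabilityMeasure ν] {p : ℝ}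
    (hp : p ≤ 1) : ENNReal.ofReal p ≤ ν {y | (y : EReal) ≤ lowerQuantile ν p} := by
  have hlt : ∀ x : ℝ, lowerQuantile ν p < x → p ≤ cdf ν x := by
    intro x hx
    obtain ⟨_, ⟨s, hs, rfl⟩, hsx⟩ := sInf_lt_iff.mp hx
    exact hs.trans ((cdf ν).mono (EReal.coe_lt_coe_iff.mp hsx).le)
  induction h : lowerQuantile ν p using EReal.rec with
  | bot =>
    have hp0 : p ≤ 0 := ge_of_tendsto (tendsto_cdf_atBot ν)
      (Eventually.of_forall fun x => hlt x (h ▸ EReal.bot_lt_coe x))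
    simp [ENNReal.ofReal_eq_zero.mpr hp0]
  | top => simpa using hp
  | coe r =>
    have hr : p ≤ cdf ν r :=
      ge_of_tendsto (((cdf ν).right_continuous r).mono Ioi_subset_Ici_self)
        (eventually_nhdsWithin_of_forall fun x hx => hlt x (h ▸ EReal.coe_lt_coe_iff.mpr hx))
    have hIic : {y : ℝ | (y : EReal) ≤ r} = Iic r := by
      ext
      simp
    rw [hIic, ← ofReal_cdf]
    exact ENNReal.ofReal_le_ofReal hr

section OrbitLaw

variable {G X : Type*} [MeasurableSpace G] [MeasurableSpace X]

noncomputable def orbitLaw (μ : Measure G) (ρ : G → X → X) (x : X) : Measure X :=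
  μ.map fun g => ρ g x

theorem measure_preimage_eq_lintegral_orbitLaw {Ω : Type*} [MeasurableSpace Ω] {P : Measure Ω}
    [IsFiniteMeasure P] {μ : Measure G} {ρ : G → X → X} (hρ : Measurable (uncurry ρ))
    {Gv : Ω → G} {W : Ω → X} (hG : Measurable Gv) (hW : Measurable W) (hGlaw : P.map Gv = μ)
    (hindep : IndepFun Gv W P) (hW_eq : P.map W = P.map fun ω => ρ (Gv ω) (W ω))
    {A : Set X} (hA : MeasurableSet A) :
    P (W ⁻¹' A) = ∫⁻ x, orbitLaw μ ρ x A ∂(P.map W) := by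
  subst hGlaw
  have hjoint : P.map (fun ω => (Gv ω, W ω)) = (P.map Gv).prod (P.map W) :=
    (indepFun_iff_map_prod_eq_prod_map_map hG.aemeasurable hW.aemeasurable).mp hindep
  have hρGW : Measurable fun ω => ρ (Gv ω) (W ω) := hρ.comp (hG.prodMk hW)
  calc P (W ⁻¹' A) = P.map (fun ω => ρ (Gv ω) (W ω)) A := by rw [← hW_eq, Measure.map_apply hW hA]
    _ = P.map (fun ω => (Gv ω, W ω)) (uncurry ρ ⁻¹' A) := by
      rw [Measure.map_apply hρGW hA, Measure.map_apply (hG.prodMk hW) (hρ hA)]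
      rfl
    _ = ∫⁻ x, orbitLaw (P.map Gv) ρ x A ∂(P.map W) := by
      rw [hjoint, Measure.prod_apply_symm (hρ hA)]
      refine lintegral_congr fun x => ?_
      rw [orbitLaw, Measure.map_apply hρ.of_uncurry_right hA]
      rfl

variable [Group G] [MeasurableMul G] [MeasurableInv G] (μ : Measure G) [μ.IsMulLeftInvariant]
  {ρ : G → X → X}

theorem map_act_inv_act (hρ_mul : ∀ g g', ρ (g * g') = ρ g ∘ ρ g') (hρ : Measurable (uncurry ρ))
    (h : G) (x : X) :
    μ.map (fun g => ρ g⁻¹ (ρ h x)) = μ.map fun g => ρ g⁻¹ x := by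
  have hcomp : (fun g => ρ g⁻¹ (ρ h x)) = (fun g => ρ g⁻¹ x) ∘ (h⁻¹ * ·) := by
    funext g
    simp [hρ_mul]
  have hinv : Measurable fun g : G => ρ g⁻¹ x := hρ.of_uncurry_right.comp measurable_inv
  rw [hcomp, ← Measure.map_map hinv (measurable_const_mul _), map_mul_left_eq_self]

theorem orbitLaw_eq_map_act_inv [IsProbabilityMeasure μ]
    (hρ_mul : ∀ g g', ρ (g * g') = ρ g ∘ ρ g') (hρ : Measurable (uncurry ρ)) (x : X) :
    orbitLaw μ ρ x = μ.map fun g => ρ g⁻¹ x := by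
  ext A hA
  have hS : MeasurableSet {p : G × G | ρ p.1⁻¹ (ρ p.2 x) ∈ A} :=
    (hρ.comp ((measurable_inv.comp measurable_fst).prodMk
      (hρ.of_uncurry_right.comp measurable_snd))) hA
  have hfst : ∀ k, μ (Prod.mk k ⁻¹' {p : G × G | ρ p.1⁻¹ (ρ p.2 x) ∈ A}) = orbitLaw μ ρ x A := by
    intro k
    have hk : Prod.mk k ⁻¹' {p : G × G | ρ p.1⁻¹ (ρ p.2 x) ∈ A}
        = (k⁻¹ * ·) ⁻¹' ((fun g => ρ g x) ⁻¹' A) := by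
      ext h
      simp [hρ_mul]
    rw [hk, measure_preimage_mul, orbitLaw, Measure.map_apply hρ.of_uncurry_right hA]
  have hsnd : ∀ h, μ ((·, h) ⁻¹' {p : G × G | ρ p.1⁻¹ (ρ p.2 x) ∈ A})
      = μ.map (fun g => ρ g⁻¹ x) A := by
    intro h
    have hinvh : Measurable fun g : G => ρ g⁻¹ (ρ h x) := hρ.of_uncurry_right.comp measurable_inv
    rw [← map_act_inv_act μ hρ_mul hρ h x, Measure.map_apply hinvh hA]
    rfl
  have hprod := Measure.prod_apply (μ := μ) (ν := μ) hS
  rw [Measure.prod_apply_symm hS, lintegral_congr hsnd, lintegral_congr hfst] at hprod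
  simpa using hprod.symm

theorem orbitLaw_act [IsProbabilityMeasure μ]
    (hρ_mul : ∀ g g', ρ (g * g') = ρ g ∘ ρ g') (hρ : Measurable (uncurry ρ)) (g : G) (x : X) :
    orbitLaw μ ρ (ρ g x) = orbitLaw μ ρ x := by
  rw [orbitLaw_eq_map_act_inv μ hρ_mul hρ, orbitLaw_eq_map_act_inv μ hρ_mul hρ,
    map_act_inv_act μ hρ_mul hρ]

end OrbitLaw

section SymmPI

variable {𝒢 𝒵t : Type*} [MeasurableSpace 𝒢] {U : Measure 𝒢}
  [IsProbabilityMeasure U] {ρt : 𝒢 → 𝒵t → 𝒵t} {ψ : 𝒵t → ℝ}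

theorem symmPIcdf_eq_cdf {z : 𝒵t} (hψ : Measurable fun g => ψ (ρt g z)) :
    symmPIcdf U ρt ψ z = cdf (U.map fun g => ψ (ρt g z)) := by
  have := Measure.isProbabilityMeasure_map (μ := U) hψ.aemeasurable
  funext x
  rw [cdf_eq_real, measureReal_def, Measure.map_apply hψ measurableSet_Iic]
  rfl

theorem ofReal_le_measure_le_symmPIthr {α : ℝ} (hα : 0 ≤ α) {z : 𝒵t}
    (hψ : Measurable fun g => ψ (ρt g z)) :
    ENNReal.ofReal (1 - α) ≤ U {g | (ψ (ρt g z) : EReal) ≤ symmPIthr U ρt ψ α z} := by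
  have := Measure.isProbabilityMeasure_map (μ := U) hψ.aemeasurable
  have := ofReal_le_measure_le_lowerQuantile (U.map fun g => ψ (ρt g z)) (p := 1 - α)
    (by linarith)
  rwa [Measure.map_apply hψ (measurableSet_le measurable_coe_real_ereal measurable_const),
    lowerQuantile, ← symmPIcdf_eq_cdf hψ] at this

theorem symmPIthr_act [MeasurableSpace 𝒵t] [Group 𝒢] [MeasurableMul 𝒢] [MeasurableInv 𝒢]
    [U.IsMulLeftInvariant]
    (hρt_mul : ∀ g g', ρt (g * g') = ρt g ∘ ρt g') (hρt : Measurable (uncurry ρt))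
    (hψ : Measurable ψ) (α : ℝ) (g : 𝒢) (z : 𝒵t) :
    symmPIthr U ρt ψ α (ρt g z) = symmPIthr U ρt ψ α z := by
  have hcdf : ∀ w, symmPIcdf U ρt ψ w = cdf ((orbitLaw U ρt w).map ψ) := fun w => by
    rw [orbitLaw, Measure.map_map hψ hρt.of_uncurry_right]
    exact symmPIcdf_eq_cdf (hψ.comp hρt.of_uncurry_right)
  simp only [symmPIthr, hcdf, orbitLaw_act U hρt_mul hρt]

theorem ofReal_le_orbitLaw_le_symmPIthr [MeasurableSpace 𝒵t] [Group 𝒢] [MeasurableMul 𝒢]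
    [MeasurableInv 𝒢] [U.IsMulLeftInvariant]
    (hρt_mul : ∀ g g', ρt (g * g') = ρt g ∘ ρt g') (hρt : Measurable (uncurry ρt))
    (hψ : Measurable ψ) {α : ℝ} (hα : 0 ≤ α) (ht : Measurable (symmPIthr U ρt ψ α)) (w : 𝒵t) :
    ENNReal.ofReal (1 - α) ≤ orbitLaw U ρt w {z | (ψ z : EReal) ≤ symmPIthr U ρt ψ α z} := by
  have hA : MeasurableSet {z | (ψ z : EReal) ≤ symmPIthr U ρt ψ α z} :=
    measurableSet_le (measurable_coe_real_ereal.comp hψ) ht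
  rw [orbitLaw, Measure.map_apply hρt.of_uncurry_right hA]
  simp only [preimage_ofPred_eq, symmPIthr_act hρt_mul hρt hψ]
  exact ofReal_le_measure_le_symmPIthr hα (hψ.comp hρt.of_uncurry_right)

end SymmPI

theorem stmt4_general
    {Ω 𝒢 𝒵 𝒵t 𝒪 : Type*} [MeasurableSpace Ω] [MeasurableSpace 𝒢] [MeasurableSpace 𝒵]
    [MeasurableSpace 𝒵t]
    [Group 𝒢] [TopologicalSpace 𝒢] [IsTopologicalGroup 𝒢]
    [BorelSpace 𝒢]
    (P : Measure Ω) [IsProbabilityMeasure P]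
    (U : Measure 𝒢) [IsProbabilityMeasure U]
    (hU : ∀ g : 𝒢, Measure.map (fun h => g * h) U = U)
    (ρ : 𝒢 → 𝒵 → 𝒵)
    (hρ_meas : Measurable (fun p : 𝒢 × 𝒵 => ρ p.1 p.2))
    (ρt : 𝒢 → 𝒵t → 𝒵t)
    (hρt_mul : ∀ g g' : 𝒢, ρt (g * g') = ρt g ∘ ρt g')
    (hρt_meas : Measurable (fun p : 𝒢 × 𝒵t => ρt p.1 p.2))
    (V : 𝒵 → 𝒵t) (hV : Measurable V)
    (ψ : 𝒵t → ℝ) (hψ : Measurable ψ)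
    (α : ℝ) (hα : α ∈ Set.Icc (0 : ℝ) 1)
    (ht_meas : Measurable (fun z : 𝒵t => symmPIthr U ρt ψ α z))
    (o : 𝒵 → 𝒪)
    (Zv : Ω → 𝒵) (Gv : Ω → 𝒢) (hZ : Measurable Zv) (hG : Measurable Gv)
    (hGlaw : Measure.map Gv P = U)
    (hindep : IndepFun Gv Zv P)
    (hinv : Measure.map (fun ω => ρ (Gv ω) (Zv ω)) P = Measure.map Zv P)
    (hequiv : Measure.map (fun ω => V (ρ (Gv ω) (Zv ω))) P
        = Measure.map (fun ω => ρt (Gv ω) (V (Zv ω))) P) :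
    1 - α ≤ (P {ω | (ψ (V (Zv ω)) : EReal) ≤ symmPIthr U ρt ψ α (V (Zv ω))}).toReal ∧
    1 - α ≤ (P {ω | Zv ω ∈ {z : 𝒵 |
        (ψ (V z) : EReal) ≤ symmPIthr U ρt ψ α (V z) ∧ o z = o (Zv ω)}}).toReal := by
  have : U.IsMulLeftInvariant := ⟨hU⟩
  have hW_eq : P.map (fun ω => V (Zv ω)) = P.map fun ω => ρt (Gv ω) (V (Zv ω)) :=
    calc P.map (fun ω => V (Zv ω)) = (P.map Zv).map V := (Measure.map_map hV hZ).symm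
      _ = (P.map fun ω => ρ (Gv ω) (Zv ω)).map V := by rw [hinv]
      _ = _ := (Measure.map_map hV (hρ_meas.comp (hG.prodMk hZ))).trans hequiv
  have hW : Measurable fun ω => V (Zv ω) := hV.comp hZ
  have hA : MeasurableSet {z | (ψ z : EReal) ≤ symmPIthr U ρt ψ α z} :=
    measurableSet_le (measurable_coe_real_ereal.comp hψ) ht_meas
  have hcover : ENNReal.ofReal (1 - α)
      ≤ P ((fun ω => V (Zv ω)) ⁻¹' {z | (ψ z : EReal) ≤ symmPIthr U ρt ψ α z}) := by
    rw [measure_preimage_eq_lintegral_orbitLaw hρt_meas hG hW hGlaw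
      (hindep.comp measurable_id hV) hW_eq hA]
    have := Measure.isProbabilityMeasure_map (μ := P) hW.aemeasurable
    calc ENNReal.ofReal (1 - α) = ∫⁻ _, ENNReal.ofReal (1 - α) ∂(P.map fun ω => V (Zv ω)) := by
          simp
      _ ≤ _ := lintegral_mono
          (ofReal_le_orbitLaw_le_symmPIthr hρt_mul hρt_meas hψ hα.1 ht_meas)
  have hreal := (ENNReal.ofReal_le_iff_le_toReal (measure_ne_top P _)).mp hcover
  exact ⟨hreal, by simpa using hreal⟩

/-- coverage lower bound of SymmPI: under distributional invariance of `Z`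
and distributional equivariance of `V`, `P(ψ(V(Z)) ≤ t_{V(Z)}) ≥ 1 − α`; equivalently,
the SymmPI prediction set `T(o(Z)) = {z : ψ(V(z)) ≤ t_{V(z)}, o(z) = o(Z)}` contains `Z`
with probability at least `1 − α` for any observation function `o`. -/
theorem stmt4
    {Ω 𝒢 𝒵 𝒵t 𝒪 : Type*} [MeasurableSpace Ω] [MeasurableSpace 𝒢] [MeasurableSpace 𝒵]
    [MeasurableSpace 𝒵t]
    [Group 𝒢] [TopologicalSpace 𝒢] [IsTopologicalGroup 𝒢] [CompactSpace 𝒢] [T2Space 𝒢]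
    [BorelSpace 𝒢]
    (P : Measure Ω) [IsProbabilityMeasure P]
    (U : Measure 𝒢) [IsProbabilityMeasure U]
    (hU : ∀ g : 𝒢, Measure.map (fun h => g * h) U = U)
    (ρ : 𝒢 → 𝒵 → 𝒵)
    (hρ_one : ρ 1 = id)
    (hρ_mul : ∀ g g' : 𝒢, ρ (g * g') = ρ g ∘ ρ g')
    (hρ_meas : Measurable (fun p : 𝒢 × 𝒵 => ρ p.1 p.2))
    (ρt : 𝒢 → 𝒵t → 𝒵t)
    (hρt_one : ρt 1 = id)
    (hρt_mul : ∀ g g' : 𝒢, ρt (g * g') = ρt g ∘ ρt g')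
    (hρt_meas : Measurable (fun p : 𝒢 × 𝒵t => ρt p.1 p.2))
    (V : 𝒵 → 𝒵t) (hV : Measurable V)
    (ψ : 𝒵t → ℝ) (hψ : Measurable ψ)
    (hψρ : Measurable (fun p : 𝒢 × 𝒵t => ψ (ρt p.1 p.2)))
    (α : ℝ) (hα : α ∈ Set.Icc (0 : ℝ) 1)
    (ht_meas : Measurable (fun z : 𝒵t => symmPIthr U ρt ψ α z))
    (o : 𝒵 → 𝒪)
    (Zv : Ω → 𝒵) (Gv : Ω → 𝒢) (hZ : Measurable Zv) (hG : Measurable Gv)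
    (hGlaw : Measure.map Gv P = U)
    (hindep : IndepFun Gv Zv P)
    (hinv : Measure.map (fun ω => ρ (Gv ω) (Zv ω)) P = Measure.map Zv P)
    (hequiv : Measure.map (fun ω => V (ρ (Gv ω) (Zv ω))) P
        = Measure.map (fun ω => ρt (Gv ω) (V (Zv ω))) P) :
    1 - α ≤ (P {ω | (ψ (V (Zv ω)) : EReal) ≤ symmPIthr U ρt ψ α (V (Zv ω))}).toReal ∧
    1 - α ≤ (P {ω | Zv ω ∈ {z : 𝒵 |
        (ψ (V z) : EReal) ≤ symmPIthr U ρt ψ α (V z) ∧ o z = o (Zv ω)}}).toReal :=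
  stmt4_general P U hU ρ hρ_meas ρt hρt_mul hρt_meas V hV ψ hψ α hα ht_meas o Zv Gv hZ hG hGlaw
    hindep hinv hequiv
end

section
/- (Coverage upper bound of SymmPI.) Assume Z is 𝒢-distributionally invariant (ρ(G)Z =_d Z) and V : 𝒵 → 𝒵̃ is 𝒢-distributionally equivariant (V(ρ(G)Z) =_d ρ̃(G)V(Z)). Then P(ψ(V(Z)) ≤ t_{V(Z)}) ≤ 1 − α + E[F'_{V(Z)}(t_{V(Z)})], where F'_{z̃}(x) = F_{z̃}(x) − lim_{y↑x} F_{z̃}(y) is the jump of the CDF F_{z̃} at x. -/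
/-!
The law of `ψ(ρ̃(G)z̃)` is constant along `𝒢`-orbits: this needs right invariance of `U`, which
is obtained on orbit preimages by Fubini against the inverted measure. Hence the threshold `t` is
orbit-invariant, and since `V(Z)` is invariant in law we may replace it by `ρ̃(G)V(Z)` with `G`
independent of it. Conditionally on `V(Z) = z̃` the coverage is then `F_{z̃}(t_{z̃})`, which
equals `F⁻_{z̃}(t_{z̃}) + F'_{z̃}(t_{z̃}) ≤ 1 − α + F'_{z̃}(t_{z̃})` because `F_{z̃} < 1 − α` below
`t_{z̃}`.
-/

open MeasureTheory ProbabilityTheory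

/-- The CDF of `ψ(ρ̃(G)z̃)`, `G ~ U`, extended to `EReal` arguments. -/
noncomputable def symmPIcdfE {𝒢 𝒵t : Type*} [MeasurableSpace 𝒢] (U : Measure 𝒢)
    (ρt : 𝒢 → 𝒵t → 𝒵t) (ψ : 𝒵t → ℝ) (z : 𝒵t) (t : EReal) : ℝ :=
  (U {g | (ψ (ρt g z) : EReal) ≤ t}).toReal

/-- The left limit `F⁻_{z̃}(t) = lim_{y↑t} F_{z̃}(y)` of the CDF. -/
noncomputable def symmPIcdfLeft {𝒢 𝒵t : Type*} [MeasurableSpace 𝒢] (U : Measure 𝒢)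
    (ρt : 𝒢 → 𝒵t → 𝒵t) (ψ : 𝒵t → ℝ) (z : 𝒵t) (t : EReal) : ℝ :=
  sSup (symmPIcdfE U ρt ψ z '' Set.Iio t)

/-- The jump `F'_{z̃}(t) = F_{z̃}(t) − lim_{y↑t} F_{z̃}(y)` of the CDF at `t`. -/
noncomputable def symmPIjump {𝒢 𝒵t : Type*} [MeasurableSpace 𝒢] (U : Measure 𝒢)
    (ρt : 𝒢 → 𝒵t → 𝒵t) (ψ : 𝒵t → ℝ) (z : 𝒵t) (t : EReal) : ℝ :=
  symmPIcdfE U ρt ψ z t - symmPIcdfLeft U ρt ψ z t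

section OrbitMeasure

variable {G X : Type*} [Group G] [MeasurableSpace G] [MeasurableMul G] [MeasurableInv G]
  [MeasurableSpace X] {ρ : G → X → X}

/-- The sets `{(g, h) | ρ (h * g) w ∈ B}` are measurable for the product σ-algebra through the
joint measurability of the action, even when multiplication `G × G → G` is not; this is what lets
Fubini compare `μ` with `μ.inv` on orbit preimages. -/
theorem measure_inv_orbit_preimage (μ : Measure G) [IsProbabilityMeasure μ]
    [μ.IsMulLeftInvariant] (hρ_mul : ∀ g g' : G, ρ (g * g') = ρ g ∘ ρ g')
    (hρ_meas : Measurable fun p : G × X => ρ p.1 p.2) {B : Set X} (hB : MeasurableSet B)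
    (w : X) : μ.inv {h | ρ h w ∈ B} = μ {h | ρ h w ∈ B} := by
  have hμinv : IsProbabilityMeasure μ.inv :=
    Measure.isProbabilityMeasure_map measurable_inv.aemeasurable
  set T : Set (G × G) := {p | ρ p.2 (ρ p.1 w) ∈ B}
  have hT : MeasurableSet T :=
    hρ_meas.comp (measurable_snd.prodMk (hρ_meas.comp (measurable_fst.prodMk measurable_const)))
      hB
  have hslice (g h : G) : ρ h (ρ g w) = ρ (h * g) w := by rw [hρ_mul]; rfl
  have h_left : (μ.prod μ.inv) T = μ.inv {h | ρ h w ∈ B} := by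
    have hsec (g : G) : Prod.mk g ⁻¹' T = (fun h => h * g) ⁻¹' {h | ρ h w ∈ B} :=
      Set.ext fun h => Iff.of_eq (congrArg (· ∈ B) (hslice g h))
    rw [Measure.prod_apply hT]
    simp_rw [hsec, measure_preimage_mul_right]
    rw [lintegral_const, measure_univ, mul_one]
  have h_right : (μ.prod μ.inv) T = μ {h | ρ h w ∈ B} := by
    have hsec (h : G) : (fun g => (g, h)) ⁻¹' T = (fun g => h * g) ⁻¹' {h | ρ h w ∈ B} :=
      Set.ext fun g => Iff.of_eq (congrArg (· ∈ B) (hslice g h))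
    rw [Measure.prod_apply_symm hT]
    simp_rw [hsec, measure_preimage_mul]
    rw [lintegral_const, measure_univ, mul_one]
  rw [← h_left, h_right]

theorem measure_orbit_preimage_smul (μ : Measure G) [IsProbabilityMeasure μ]
    [μ.IsMulLeftInvariant] (hρ_mul : ∀ g g' : G, ρ (g * g') = ρ g ∘ ρ g')
    (hρ_meas : Measurable fun p : G × X => ρ p.1 p.2) {B : Set X} (hB : MeasurableSet B)
    (g : G) (z : X) : μ {h | ρ h (ρ g z) ∈ B} = μ {h | ρ h z ∈ B} := by
  have hright : {h | ρ h (ρ g z) ∈ B} = (fun h => h * g) ⁻¹' {h | ρ h z ∈ B} := by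
    ext h; simp [hρ_mul]
  rw [← measure_inv_orbit_preimage μ hρ_mul hρ_meas hB, hright,
    measure_preimage_mul_right, measure_inv_orbit_preimage μ hρ_mul hρ_meas hB]

end OrbitMeasure

theorem measureReal_preimage_eq_integral_orbit {Ω G X : Type*} [MeasurableSpace Ω]
    [MeasurableSpace G] [MeasurableSpace X] {P : Measure Ω} [IsProbabilityMeasure P]
    {U : Measure G} [IsFiniteMeasure U] {ρ : G → X → X}
    (hρ_meas : Measurable fun p : G × X => ρ p.1 p.2) {Gv : Ω → G} {W : Ω → X}
    (hG : Measurable Gv) (hW : Measurable W) (hGlaw : P.map Gv = U) (hindep : IndepFun Gv W P)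
    (hinv : P.map (fun ω => ρ (Gv ω) (W ω)) = P.map W) {A : Set X} (hA : MeasurableSet A) :
    P.real (W ⁻¹' A) = ∫ z, U.real {g | ρ g z ∈ A} ∂(P.map W) := by
  set T : Set (G × X) := {p | ρ p.1 p.2 ∈ A}
  have hT : MeasurableSet T := hρ_meas hA
  have hjoint : P.map (fun ω => (Gv ω, W ω)) = U.prod (P.map W) := by
    rw [← hGlaw]
    exact (indepFun_iff_map_prod_eq_prod_map_map hG.aemeasurable hW.aemeasurable).mp hindep
  have hρGW : Measurable fun ω => ρ (Gv ω) (W ω) := hρ_meas.comp (hG.prodMk hW)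
  have hlaw : P (W ⁻¹' A) = U.prod (P.map W) T := by
    rw [← hjoint, Measure.map_apply (hG.prodMk hW) hT, ← Measure.map_apply hW hA, ← hinv,
      Measure.map_apply hρGW hA]
    rfl
  rw [measureReal_def, hlaw, Measure.prod_apply_symm hT,
    ← integral_toReal (measurable_measure_prodMk_right hT).aemeasurable
      (ae_of_all _ fun _ => measure_lt_top U _)]
  rfl

section SymmPI

variable {𝒢 𝒵t : Type*} [MeasurableSpace 𝒢] (U : Measure 𝒢) (ρt : 𝒢 → 𝒵t → 𝒵t) (ψ : 𝒵t → ℝ)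

theorem symmPIcdfE_le_one [IsProbabilityMeasure U] (z : 𝒵t) (t : EReal) :
    symmPIcdfE U ρt ψ z t ≤ 1 :=
  measureReal_le_one

theorem symmPIcdfE_mono [IsFiniteMeasure U] (z : 𝒵t) : Monotone (symmPIcdfE U ρt ψ z) :=
  fun _ _ hst => measureReal_mono fun _ hg => le_trans hg hst

theorem symmPIcdfLeft_nonneg (z : 𝒵t) (t : EReal) : 0 ≤ symmPIcdfLeft U ρt ψ z t :=
  Real.sSup_nonneg (by rintro _ ⟨s, -, rfl⟩; exact measureReal_nonneg)

theorem symmPIcdfLeft_le_symmPIcdfE [IsFiniteMeasure U] (z : 𝒵t) (t : EReal) :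
    symmPIcdfLeft U ρt ψ z t ≤ symmPIcdfE U ρt ψ z t :=
  Real.sSup_le (by rintro _ ⟨s, hs, rfl⟩; exact symmPIcdfE_mono U ρt ψ z hs.le) measureReal_nonneg

theorem symmPIjump_mem_Icc [IsProbabilityMeasure U] (z : 𝒵t) (t : EReal) :
    symmPIjump U ρt ψ z t ∈ Set.Icc 0 1 :=
  ⟨sub_nonneg.mpr (symmPIcdfLeft_le_symmPIcdfE U ρt ψ z t),
    by unfold symmPIjump; linarith [symmPIcdfE_le_one U ρt ψ z t, symmPIcdfLeft_nonneg U ρt ψ z t]⟩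

theorem symmPIcdfE_coe (z : 𝒵t) (x : ℝ) : symmPIcdfE U ρt ψ z x = symmPIcdf U ρt ψ z x := by
  simp only [symmPIcdfE, symmPIcdf, EReal.coe_le_coe_iff]

/-- Below the threshold the CDF stays under `1 - α`, hence so does its left limit there. -/
theorem symmPIcdfLeft_symmPIthr_le {α : ℝ} (hα : α ≤ 1) (z : 𝒵t) :
    symmPIcdfLeft U ρt ψ z (symmPIthr U ρt ψ α z) ≤ 1 - α := by
  refine Real.sSup_le ?_ (by linarith)
  rintro _ ⟨s, hs : s < symmPIthr U ρt ψ α z, rfl⟩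
  induction s with
  | bot => simp [symmPIcdfE, hα]
  | coe x =>
    rw [symmPIcdfE_coe]
    by_contra hlt
    exact hs.not_ge (sInf_le (Set.mem_image_of_mem _ (not_le.mp hlt).le))
  | top => exact absurd hs not_top_lt

theorem symmPIcdfE_symmPIthr_le {α : ℝ} (hα : α ≤ 1) (z : 𝒵t) :
    symmPIcdfE U ρt ψ z (symmPIthr U ρt ψ α z)
      ≤ 1 - α + symmPIjump U ρt ψ z (symmPIthr U ρt ψ α z) := by
  unfold symmPIjump
  linarith [symmPIcdfLeft_symmPIthr_le U ρt ψ hα z]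

variable {U ρt ψ} [IsProbabilityMeasure U] [Group 𝒢] [MeasurableMul 𝒢] [MeasurableInv 𝒢]
  [U.IsMulLeftInvariant] [MeasurableSpace 𝒵t]

theorem symmPIcdf_smul (hρt_mul : ∀ g g' : 𝒢, ρt (g * g') = ρt g ∘ ρt g')
    (hρt_meas : Measurable fun p : 𝒢 × 𝒵t => ρt p.1 p.2) (hψ : Measurable ψ) (g : 𝒢) (z : 𝒵t)
    (x : ℝ) : symmPIcdf U ρt ψ (ρt g z) x = symmPIcdf U ρt ψ z x :=
  congrArg ENNReal.toReal
    (measure_orbit_preimage_smul U hρt_mul hρt_meas (hψ measurableSet_Iic) g z)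

theorem symmPIthr_smul (hρt_mul : ∀ g g' : 𝒢, ρt (g * g') = ρt g ∘ ρt g')
    (hρt_meas : Measurable fun p : 𝒢 × 𝒵t => ρt p.1 p.2) (hψ : Measurable ψ) (α : ℝ) (g : 𝒢)
    (z : 𝒵t) : symmPIthr U ρt ψ α (ρt g z) = symmPIthr U ρt ψ α z := by
  simp only [symmPIthr, symmPIcdf_smul hρt_mul hρt_meas hψ g z]

end SymmPI

theorem stmt5_general
    {Ω 𝒢 𝒵 𝒵t : Type*} [MeasurableSpace Ω] [MeasurableSpace 𝒢] [MeasurableSpace 𝒵]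
    [MeasurableSpace 𝒵t]
    [Group 𝒢] [TopologicalSpace 𝒢] [IsTopologicalGroup 𝒢]
    [BorelSpace 𝒢]
    (P : Measure Ω) [IsProbabilityMeasure P]
    (U : Measure 𝒢) [IsProbabilityMeasure U]
    (hU : ∀ g : 𝒢, Measure.map (fun h => g * h) U = U)
    (ρ : 𝒢 → 𝒵 → 𝒵)
    (hρ_meas : Measurable (fun p : 𝒢 × 𝒵 => ρ p.1 p.2))
    (ρt : 𝒢 → 𝒵t → 𝒵t)
    (hρt_mul : ∀ g g' : 𝒢, ρt (g * g') = ρt g ∘ ρt g')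
    (hρt_meas : Measurable (fun p : 𝒢 × 𝒵t => ρt p.1 p.2))
    (V : 𝒵 → 𝒵t) (hV : Measurable V)
    (ψ : 𝒵t → ℝ) (hψ : Measurable ψ)
    (α : ℝ) (hα : α ∈ Set.Icc (0 : ℝ) 1)
    (ht_meas : Measurable (fun z : 𝒵t => symmPIthr U ρt ψ α z))
    (hjump_meas : Measurable (fun z : 𝒵t => symmPIjump U ρt ψ z (symmPIthr U ρt ψ α z)))
    (Zv : Ω → 𝒵) (Gv : Ω → 𝒢) (hZ : Measurable Zv) (hG : Measurable Gv)
    (hGlaw : Measure.map Gv P = U)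
    (hindep : IndepFun Gv Zv P)
    (hinv : Measure.map (fun ω => ρ (Gv ω) (Zv ω)) P = Measure.map Zv P)
    (hequiv : Measure.map (fun ω => V (ρ (Gv ω) (Zv ω))) P
        = Measure.map (fun ω => ρt (Gv ω) (V (Zv ω))) P) :
    (P {ω | (ψ (V (Zv ω)) : EReal) ≤ symmPIthr U ρt ψ α (V (Zv ω))}).toReal
      ≤ 1 - α + ∫ ω, symmPIjump U ρt ψ (V (Zv ω)) (symmPIthr U ρt ψ α (V (Zv ω))) ∂P := by
  have : U.IsMulLeftInvariant := ⟨hU⟩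
  set t := symmPIthr U ρt ψ α
  have hVZ : Measurable (V ∘ Zv) := hV.comp hZ
  have := Measure.isProbabilityMeasure_map (μ := P) hVZ.aemeasurable
  have hρGZ : Measurable fun ω => ρ (Gv ω) (Zv ω) := hρ_meas.comp (hG.prodMk hZ)
  have hVZ_inv : P.map (fun ω => ρt (Gv ω) (V (Zv ω))) = P.map (V ∘ Zv) := by
    rw [← hequiv, ← Measure.map_map hV hZ, ← hinv, Measure.map_map hV hρGZ]
    rfl
  have horbit (z : 𝒵t) :
      U.real {g | ρt g z ∈ {w | (ψ w : EReal) ≤ t w}} = symmPIcdfE U ρt ψ z (t z) := by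
    simp only [Set.mem_ofPred_eq, t, symmPIthr_smul hρt_mul hρt_meas hψ]; rfl
  have hjump_int : Integrable (fun z => symmPIjump U ρt ψ z (t z)) (P.map (V ∘ Zv)) :=
    .of_bound hjump_meas.aestronglyMeasurable 1 (ae_of_all _ fun z => by
      obtain ⟨h0, h1⟩ := symmPIjump_mem_Icc U ρt ψ z (t z)
      rwa [Real.norm_eq_abs, abs_of_nonneg h0])
  calc (P ((V ∘ Zv) ⁻¹' {w | (ψ w : EReal) ≤ t w})).toReal
      = ∫ z, symmPIcdfE U ρt ψ z (t z) ∂(P.map (V ∘ Zv)) := by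
        rw [← measureReal_def, measureReal_preimage_eq_integral_orbit hρt_meas hG hVZ hGlaw
          (hindep.comp measurable_id hV) hVZ_inv (measurableSet_le hψ.coe_real_ereal ht_meas)]
        simp only [horbit]
    _ ≤ ∫ z, (1 - α + symmPIjump U ρt ψ z (t z)) ∂(P.map (V ∘ Zv)) :=
        integral_mono_of_nonneg (ae_of_all _ fun _ => measureReal_nonneg)
          ((integrable_const _).add hjump_int)
          (ae_of_all _ (symmPIcdfE_symmPIthr_le U ρt ψ hα.2))
    _ = 1 - α + ∫ ω, symmPIjump U ρt ψ (V (Zv ω)) (t (V (Zv ω))) ∂P := by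
        rw [integral_add (integrable_const _) hjump_int, integral_const, probReal_univ, one_smul,
          integral_map hVZ.aemeasurable hjump_meas.aestronglyMeasurable]
        rfl

/-- coverage upper bound of SymmPI: under distributional invariance of `Z`
and distributional equivariance of `V`,
`P(ψ(V(Z)) ≤ t_{V(Z)}) ≤ 1 − α + E[F'_{V(Z)}(t_{V(Z)})]`. -/
theorem stmt5
    {Ω 𝒢 𝒵 𝒵t : Type*} [MeasurableSpace Ω] [MeasurableSpace 𝒢] [MeasurableSpace 𝒵]
    [MeasurableSpace 𝒵t]
    [Group 𝒢] [TopologicalSpace 𝒢] [IsTopologicalGroup 𝒢] [CompactSpace 𝒢] [T2Space 𝒢]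
    [BorelSpace 𝒢]
    (P : Measure Ω) [IsProbabilityMeasure P]
    (U : Measure 𝒢) [IsProbabilityMeasure U]
    (hU : ∀ g : 𝒢, Measure.map (fun h => g * h) U = U)
    (ρ : 𝒢 → 𝒵 → 𝒵)
    (hρ_one : ρ 1 = id)
    (hρ_mul : ∀ g g' : 𝒢, ρ (g * g') = ρ g ∘ ρ g')
    (hρ_meas : Measurable (fun p : 𝒢 × 𝒵 => ρ p.1 p.2))
    (ρt : 𝒢 → 𝒵t → 𝒵t)
    (hρt_one : ρt 1 = id)
    (hρt_mul : ∀ g g' : 𝒢, ρt (g * g') = ρt g ∘ ρt g')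
    (hρt_meas : Measurable (fun p : 𝒢 × 𝒵t => ρt p.1 p.2))
    (V : 𝒵 → 𝒵t) (hV : Measurable V)
    (ψ : 𝒵t → ℝ) (hψ : Measurable ψ)
    (hψρ : Measurable (fun p : 𝒢 × 𝒵t => ψ (ρt p.1 p.2)))
    (α : ℝ) (hα : α ∈ Set.Icc (0 : ℝ) 1)
    (ht_meas : Measurable (fun z : 𝒵t => symmPIthr U ρt ψ α z))
    (hjump_meas : Measurable (fun z : 𝒵t => symmPIjump U ρt ψ z (symmPIthr U ρt ψ α z)))
    (Zv : Ω → 𝒵) (Gv : Ω → 𝒢) (hZ : Measurable Zv) (hG : Measurable Gv)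
    (hGlaw : Measure.map Gv P = U)
    (hindep : IndepFun Gv Zv P)
    (hinv : Measure.map (fun ω => ρ (Gv ω) (Zv ω)) P = Measure.map Zv P)
    (hequiv : Measure.map (fun ω => V (ρ (Gv ω) (Zv ω))) P
        = Measure.map (fun ω => ρt (Gv ω) (V (Zv ω))) P) :
    (P {ω | (ψ (V (Zv ω)) : EReal) ≤ symmPIthr U ρt ψ α (V (Zv ω))}).toReal
      ≤ 1 - α + ∫ ω, symmPIjump U ρt ψ (V (Zv ω)) (symmPIthr U ρt ψ α (V (Zv ω))) ∂P :=
  stmt5_general P U hU ρ hρ_meas ρt hρt_mul hρt_meas V hV ψ hψ α hα ht_meas hjump_meas Zv Gv hZ hG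
    hGlaw hindep hinv hequiv
end

section
/- (Validity of the Monte Carlo SymmPI quantile.) Assume Z is 𝒢-distributionally invariant (ρ(G)Z =_d Z for G ~ U independent of Z) and V : 𝒵 → 𝒵̃ is 𝒢-distributionally equivariant. Let G_1, …, G_M be i.i.d. with distribution U, independent of Z. For z̃ ∈ 𝒵̃ define the random threshold t̃_{z̃} := Q_{1−α}( ψ(z̃), ψ(ρ̃(G_1)z̃), ψ(ρ̃(G_2)z̃), …, ψ(ρ̃(G_M)z̃) ), the (1−α)-quantile of the empirical distribution of these M+1 values, i.e. the ⌈(1−α)(M+1)⌉-th smallest value. Then P( ψ(V(Z)) ≤ t̃_{V(Z)} ) ≥ 1 − α, where the probability is over (Z, G_1, …, G_M). -/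
/-!
Invariance of `Z` and equivariance of `V` show that the law `μ` of `W = V(Z)` is the law of
`ρ̃(G)W`, hence is invariant under every `ρ̃(a)` since `U` is left invariant.
For measurable `C`, the hitting probability `B_C(w) = U{g | ρ̃(g)w ∈ C}` is harmonic,
`∫ B_C(ρ̃(g)w) dU(g) = B_C(w)`, by Fubini and left invariance; together with the invariance of `μ`
this gives `E[(B_C(ρ̃(G)W) - B_C(W))²] = 0`, so `B_C` is almost surely constant along the action.
(This replaces the right invariance of `U` that a direct change of variables would need.)
Hence `P((W, ρ̃(G₁)W, …, ρ̃(G_M)W) ∈ ∏ C_k) = ∫ ∏_k B_{C_k} dμ` is symmetric in `k`: the Monte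
Carlo vector is exchangeable. For an exchangeable vector every coordinate lies below the empirical
`(1-α)`-quantile with the same probability, while at least `(1-α)(M+1)` coordinates always do.
-/

open MeasureTheory ProbabilityTheory

/-- The empirical `(1−α)`-quantile of a finite family of reals:
`Q_{1−α}(v) := inf{x : #{j : v_j ≤ x}/N ≥ 1−α}`. -/
noncomputable def empQuantile {ι : Type*} [Fintype ι] (α : ℝ) (v : ι → ℝ) : ℝ :=
  sInf {x : ℝ | 1 - α ≤ ({j : ι | v j ≤ x}.ncard : ℝ) / (Fintype.card ι : ℝ)}

open scoped ENNReal

section EmpiricalQuantile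

variable {ι : Type*} [Fintype ι] {α : ℝ}

lemma empQuantile_comp_perm (v : ι → ℝ) (σ : Equiv.Perm ι) :
    empQuantile α (v ∘ σ) = empQuantile α v := by
  have hcard (x : ℝ) : {j | (v ∘ σ) j ≤ x}.ncard = {j | v j ≤ x}.ncard :=
    Set.ncard_preimage_of_injective_subset_range (s := {j | v j ≤ x}) σ.injective (by simp)
  simp only [empQuantile, hcard]

variable [Nonempty ι] (hα₀ : 0 ≤ α) (hα₁ : α < 1) (v : ι → ℝ)
include hα₀ hα₁

lemma le_empQuantile_iff (x : ℝ) :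
    x ≤ empQuantile α v ↔ ({j | v j < x}.ncard : ℝ) / Fintype.card ι < 1 - α := by
  have hN : (0 : ℝ) < Fintype.card ι := by exact_mod_cast Fintype.card_pos
  obtain ⟨jmax, hjmax⟩ := Finite.exists_max v
  obtain ⟨jmin, hjmin⟩ := Finite.exists_min v
  have hne : {x : ℝ | 1 - α ≤ ({j | v j ≤ x}.ncard : ℝ) / Fintype.card ι}.Nonempty := by
    refine ⟨v jmax, ?_⟩
    simp [hjmax, Set.ncard_univ, hN.ne', hα₀]
  have hbdd : BddBelow {x : ℝ | 1 - α ≤ ({j | v j ≤ x}.ncard : ℝ) / Fintype.card ι} := by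
    refine ⟨v jmin, fun y hy => not_lt.1 fun hlt => ?_⟩
    have hempty : {j | v j ≤ y} = ∅ :=
      Set.eq_empty_of_forall_notMem fun j hj => (lt_of_le_of_lt hj hlt).not_ge (hjmin j)
    simp [hempty] at hy
    linarith
  rw [empQuantile, le_csInf_iff hbdd hne]
  constructor
  · intro h
    by_contra! hx
    have hpos : {j | v j < x}.ncard ≠ 0 := fun h0 => by
      simp [h0] at hx
      linarith
    obtain ⟨a, ha, hmax⟩ :=
      Set.exists_max_image _ v (Set.toFinite _) (Set.nonempty_of_ncard_ne_zero hpos)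
    have hset : {j | v j ≤ v a} = {j | v j < x} :=
      Set.ext fun j => by
        simp only [Set.mem_ofPred_eq]
        exact ⟨fun hj => lt_of_le_of_lt hj ha, fun hj => hmax j hj⟩
    exact (h (v a) (by rwa [Set.mem_ofPred_eq, hset])).not_gt ha
  · intro hx y hy
    by_contra! hyx
    have hsub : {j | v j ≤ y}.ncard ≤ {j | v j < x}.ncard :=
      Set.ncard_le_ncard fun j hj => lt_of_le_of_lt hj hyx
    have hdiv : ({j | v j ≤ y}.ncard : ℝ) / Fintype.card ι
        ≤ ({j | v j < x}.ncard : ℝ) / Fintype.card ι :=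
      div_le_div_of_nonneg_right (by exact_mod_cast hsub) hN.le
    rw [Set.mem_ofPred_eq] at hy
    linarith

lemma one_sub_mul_card_le_ncard_le_empQuantile :
    (1 - α) * Fintype.card ι ≤ {j | v j ≤ empQuantile α v}.ncard := by
  rw [← le_div_iff₀ (by exact_mod_cast Fintype.card_pos)]
  by_cases habove : {j | empQuantile α v < v j}.Nonempty
  · obtain ⟨a, ha, hmin⟩ := Set.exists_min_image _ v (Set.toFinite _) habove
    have hset : {j | v j < v a} = {j | v j ≤ empQuantile α v} :=
      Set.ext fun j => by
        simp only [Set.mem_ofPred_eq]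
        exact ⟨fun hj => not_lt.1 fun hQ => absurd (hmin j hQ) (not_le.2 hj),
          fun hj => lt_of_le_of_lt hj ha⟩
    simpa [hset] using (le_empQuantile_iff hα₀ hα₁ v (v a)).not.1 (not_le.2 ha)
  · have hall : {j | v j ≤ empQuantile α v} = Set.univ :=
      Set.eq_univ_of_forall fun j => Set.mem_ofPred_eq ▸ not_lt.1 fun hj => habove ⟨j, hj⟩
    have hN : (Fintype.card ι : ℝ) ≠ 0 := by exact_mod_cast Fintype.card_ne_zero
    simp [hall, Set.ncard_univ, hN, hα₀]

lemma measurableSet_le_empQuantile (i : ι) :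
    MeasurableSet {v : ι → ℝ | v i ≤ empQuantile α v} := by
  have hset : {v : ι → ℝ | v i ≤ empQuantile α v}
      = {v | (∑ j, if v j < v i then (1 : ℝ) else 0) / Fintype.card ι < 1 - α} := by
    ext v
    simp only [Set.mem_ofPred_eq, le_empQuantile_iff hα₀ hα₁, Set.ncard_eq_toFinset_card',
      Set.toFinset_ofPred, Finset.natCast_card_filter]
  rw [hset]
  refine measurableSet_lt (Measurable.div_const ?_ _) measurable_const
  exact Finset.measurable_sum _ fun j _ => Measurable.ite
    (measurableSet_lt (measurable_pi_apply j) (measurable_pi_apply i)) measurable_const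
    measurable_const

end EmpiricalQuantile

def IsExchangeable {ι 𝒳 : Type*} [MeasurableSpace 𝒳] (ν : Measure (ι → 𝒳)) : Prop :=
  ∀ σ : Equiv.Perm ι, ν.map (fun x => x ∘ σ) = ν

lemma IsExchangeable.map_comp {ι 𝒳 𝒴 : Type*} [MeasurableSpace 𝒳] [MeasurableSpace 𝒴]
    {ν : Measure (ι → 𝒳)} (hν : IsExchangeable ν) {ψ : 𝒳 → 𝒴} (hψ : Measurable ψ) :
    IsExchangeable (ν.map (ψ ∘ ·)) := by
  intro σ
  rw [Measure.map_map (by fun_prop) (by fun_prop)]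
  conv_rhs => rw [← hν σ, Measure.map_map (by fun_prop) (by fun_prop)]
  rfl

lemma one_sub_le_prob_le_empQuantile {ι Ω : Type*} [Fintype ι] [MeasurableSpace Ω] {α : ℝ}
    {P : Measure Ω} [IsProbabilityMeasure P] {X : Ω → ι → ℝ} (hX : Measurable X)
    (hX_exch : IsExchangeable (P.map X)) (hα₀ : 0 ≤ α) (i : ι) :
    1 - α ≤ (P {ω | X ω i ≤ empQuantile α (X ω)}).toReal := by
  classical
  have : Nonempty ι := ⟨i⟩
  have : IsProbabilityMeasure (P.map X) := Measure.isProbabilityMeasure_map hX.aemeasurable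
  rcases le_or_gt 1 α with hα₁ | hα₁
  · exact (sub_nonpos.2 hα₁).trans ENNReal.toReal_nonneg
  set E : ι → Set (ι → ℝ) := fun j => {v | v j ≤ empQuantile α v}
  have hE (j : ι) : MeasurableSet (E j) := measurableSet_le_empQuantile hα₀ hα₁ j
  have hEj (j : ι) : P.map X (E j) = P.map X (E i) := by
    have hpre : (fun v : ι → ℝ => v ∘ Equiv.swap i j) ⁻¹' E i = E j := by
      ext v
      simp [E, empQuantile_comp_perm]
    rw [← hpre, ← Measure.map_apply (by fun_prop) (hE i), hX_exch]
  have hcount (v : ι → ℝ) :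
      ENNReal.ofReal ((1 - α) * Fintype.card ι) ≤ ∑ j, (E j).indicator 1 v := by
    have hsum : ∑ j, (E j).indicator 1 v = ({j | v j ≤ empQuantile α v}.ncard : ℝ≥0∞) := by
      simp only [Set.indicator_apply, Set.ncard_eq_toFinset_card', Set.toFinset_ofPred,
        Finset.natCast_card_filter]
      rfl
    rw [hsum, ← ENNReal.ofReal_natCast]
    exact ENNReal.ofReal_le_ofReal (one_sub_mul_card_le_ncard_le_empQuantile hα₀ hα₁ v)
  have hmass : ENNReal.ofReal ((1 - α) * Fintype.card ι) ≤ Fintype.card ι * P.map X (E i) :=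
    calc ENNReal.ofReal ((1 - α) * Fintype.card ι)
        ≤ ∫⁻ v, ∑ j, (E j).indicator 1 v ∂(P.map X) := by
          simpa using lintegral_mono (μ := P.map X) hcount
      _ = ∑ j, P.map X (E j) := by
          rw [lintegral_finsetSum _ fun j _ => measurable_one.indicator (hE j)]
          simp only [lintegral_indicator_one (hE _)]
      _ = Fintype.card ι * P.map X (E i) := by simp [hEj]
  rw [Measure.map_apply hX (hE i)] at hmass
  rw [ENNReal.ofReal_le_iff_le_toReal (by finiteness), ENNReal.toReal_mul,
    ENNReal.toReal_natCast, mul_comm] at hmass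
  exact le_of_mul_le_mul_left hmass (by exact_mod_cast Fintype.card_pos)

lemma ae_eq_of_integral_mul_self_eq {Ω : Type*} [MeasurableSpace Ω] {μ : Measure Ω}
    {f g : Ω → ℝ} (hf : MemLp f 2 μ) (hg : MemLp g 2 μ)
    (hff : ∫ x, f x * f x ∂μ = ∫ x, f x * g x ∂μ)
    (hgg : ∫ x, g x * g x ∂μ = ∫ x, f x * g x ∂μ) : f =ᵐ[μ] g := by
  have hff' : Integrable (fun x => f x * f x) μ := hf.integrable_mul hf
  have hfg : Integrable (fun x => f x * g x) μ := hf.integrable_mul hg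
  have hgg' : Integrable (fun x => g x * g x) μ := hg.integrable_mul hg
  have hsq : ∫ x, (f x - g x) ^ 2 ∂μ = 0 := by
    calc ∫ x, (f x - g x) ^ 2 ∂μ = ∫ x, f x * f x - 2 * (f x * g x) + g x * g x ∂μ := by
          congr with x
          ring
      _ = 0 := by
          rw [integral_add (f := fun x => f x * f x - 2 * (f x * g x))
              (hff'.sub (hfg.const_mul 2)) hgg', integral_sub hff' (hfg.const_mul 2),
            integral_const_mul, hff, hgg]
          ring
  filter_upwards [(integral_eq_zero_iff_of_nonneg (fun x => sq_nonneg _)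
    (hf.sub hg).integrable_sq).1 hsq] with x hx
  exact sub_eq_zero.1 (pow_eq_zero_iff two_ne_zero |>.1 hx)

section OrbitSample

variable {𝒢 𝒳 : Type*} [MeasurableSpace 𝒢] [MeasurableSpace 𝒳]

def orbitProb (U : Measure 𝒢) (ρ : 𝒢 → 𝒳 → 𝒳) (C : Set 𝒳) (w : 𝒳) : ℝ≥0∞ :=
  U {g | ρ g w ∈ C}

def orbitSample (ρ : 𝒢 → 𝒳 → 𝒳) {M : ℕ} (p : (Fin M → 𝒢) × 𝒳) : Fin (M + 1) → 𝒳 :=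
  Fin.cons p.2 fun i => ρ (p.1 i) p.2

variable {U : Measure 𝒢} {ρ : 𝒢 → 𝒳 → 𝒳} (hρ : Measurable (Function.uncurry ρ))
include hρ

lemma measurable_orbitProb [SFinite U] {C : Set 𝒳} (hC : MeasurableSet C) :
    Measurable (orbitProb U ρ C) :=
  measurable_measure_prodMk_right (hρ hC)

lemma orbitProb_eq_lintegral {C : Set 𝒳} (hC : MeasurableSet C) (w : 𝒳) :
    orbitProb U ρ C w = ∫⁻ g, C.indicator 1 (ρ g w) ∂U := by
  have hw : Measurable fun g => ρ g w := hρ.of_uncurry_right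
  rw [← lintegral_map (measurable_one.indicator hC) hw, lintegral_indicator_one hC,
    Measure.map_apply hw hC]
  rfl

lemma measurable_orbitSample {M : ℕ} : Measurable (orbitSample ρ (M := M)) := by
  refine measurable_pi_iff.2 fun k => ?_
  cases k using Fin.cases with
  | zero => exact measurable_snd
  | succ i =>
    simp only [orbitSample, Fin.cons_succ]
    exact hρ.comp (f := fun p : (Fin M → 𝒢) × 𝒳 => (p.1 i, p.2)) (by fun_prop)

lemma map_uncurry_prod_eq [IsProbabilityMeasure U] {μ : Measure 𝒳} [SFinite μ]
    (hμ : ∀ a, μ.map (ρ a) = μ) : (U.prod μ).map (Function.uncurry ρ) = μ := by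
  ext s hs
  have hfiber (g : 𝒢) : μ (Prod.mk g ⁻¹' (Function.uncurry ρ ⁻¹' s)) = μ s := by
    change μ (ρ g ⁻¹' s) = μ s
    rw [← Measure.map_apply hρ.of_uncurry_left hs, hμ]
  rw [Measure.map_apply hρ hs, Measure.prod_apply (hρ hs)]
  simp [hfiber]

lemma lintegral_indicator_mul_eq_lintegral_orbitProb_mul [IsProbabilityMeasure U]
    {μ : Measure 𝒳} [SFinite μ] (hμ : ∀ a, μ.map (ρ a) = μ)
    {C : Set 𝒳} (hC : MeasurableSet C)
    {F : 𝒳 → ℝ≥0∞} (hF : Measurable F)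
    (hF_act : ∀ᵐ p ∂(U.prod μ), F (ρ p.1 p.2) = F p.2) :
    ∫⁻ w, C.indicator 1 w * F w ∂μ = ∫⁻ w, orbitProb U ρ C w * F w ∂μ := by
  have hind : Measurable fun p : 𝒢 × 𝒳 => C.indicator (1 : 𝒳 → ℝ≥0∞) (ρ p.1 p.2) :=
    (measurable_one.indicator hC).comp hρ
  calc ∫⁻ w, C.indicator 1 w * F w ∂μ
      = ∫⁻ p, C.indicator 1 (ρ p.1 p.2) * F (ρ p.1 p.2) ∂(U.prod μ) := by
        have h := lintegral_map (μ := U.prod μ) ((measurable_one.indicator hC).mul hF) hρ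
        rw [map_uncurry_prod_eq hρ hμ] at h
        exact h
    _ = ∫⁻ p, C.indicator 1 (ρ p.1 p.2) * F p.2 ∂(U.prod μ) :=
        lintegral_congr_ae (hF_act.mono fun p hp => by dsimp only; rw [hp])
    _ = ∫⁻ w, ∫⁻ g, C.indicator 1 (ρ g w) * F w ∂U ∂μ :=
        lintegral_prod_symm _ (hind.mul (hF.comp measurable_snd)).aemeasurable
    _ = ∫⁻ w, orbitProb U ρ C w * F w ∂μ := by
        congr with w
        have hCw : Measurable fun g => C.indicator (1 : 𝒳 → ℝ≥0∞) (ρ g w) :=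
          (measurable_one.indicator hC).comp hρ.of_uncurry_right
        rw [lintegral_mul_const _ hCw,
          orbitProb_eq_lintegral hρ hC]

variable [Group 𝒢] [MeasurableMul 𝒢] [U.IsMulLeftInvariant]
  (hρ_mul : ∀ g g' : 𝒢, ρ (g * g') = ρ g ∘ ρ g')
include hρ_mul

lemma map_map_uncurry_prod [SFinite U] {μ : Measure 𝒳} [SFinite μ] (a : 𝒢) :
    ((U.prod μ).map (Function.uncurry ρ)).map (ρ a) = (U.prod μ).map (Function.uncurry ρ) := by
  have hcomm : ρ a ∘ Function.uncurry ρ = Function.uncurry ρ ∘ Prod.map (a * ·) id := by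
    funext p
    exact (congrFun (hρ_mul a p.1) p.2).symm
  rw [Measure.map_map hρ.of_uncurry_left hρ, hcomm,
    ← Measure.map_map hρ ((measurable_const_mul a).prodMap measurable_id),
    ← Measure.map_prod_map _ _ (measurable_const_mul a) measurable_id,
    map_mul_left_eq_self, Measure.map_id]

lemma lintegral_orbitProb_act [IsProbabilityMeasure U] {C : Set 𝒳} (hC : MeasurableSet C)
    (w : 𝒳) : ∫⁻ g, orbitProb U ρ C (ρ g w) ∂U = orbitProb U ρ C w := by
  have hw : Measurable fun g => ρ g w := hρ.of_uncurry_right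
  calc ∫⁻ g, orbitProb U ρ C (ρ g w) ∂U
      = ∫⁻ g, ∫⁻ h, C.indicator 1 (ρ h (ρ g w)) ∂U ∂U := by
        simp_rw [orbitProb_eq_lintegral hρ hC]
    _ = ∫⁻ h, ∫⁻ g, C.indicator 1 (ρ h (ρ g w)) ∂U ∂U :=
        lintegral_lintegral_swap ((measurable_one.indicator hC).comp
          (hρ.comp (measurable_snd.prodMk (hw.comp measurable_fst)))).aemeasurable
    _ = ∫⁻ h, ∫⁻ g, C.indicator 1 (ρ (h * g) w) ∂U ∂U := by
        simp only [hρ_mul, Function.comp_apply]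
    _ = ∫⁻ h, ∫⁻ g, C.indicator 1 (ρ g w) ∂U ∂U := by
        simp only [lintegral_mul_left_eq_self (fun g => C.indicator 1 (ρ g w))]
    _ = orbitProb U ρ C w := by
        simp [orbitProb_eq_lintegral hρ hC]

variable [IsProbabilityMeasure U] {μ : Measure 𝒳} [IsFiniteMeasure μ]
  (hμ : ∀ a, μ.map (ρ a) = μ)
include hμ

lemma ae_orbitProb_act_eq {C : Set 𝒳} (hC : MeasurableSet C) :
    ∀ᵐ p ∂(U.prod μ), orbitProb U ρ C (ρ p.1 p.2) = orbitProb U ρ C p.2 := by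
  set B := orbitProb U ρ C
  have hB : Measurable B := measurable_orbitProb hρ hC
  have hmemLp {F : 𝒢 × 𝒳 → 𝒳} (hF : Measurable F) :
      MemLp (fun p => (B (F p)).toReal) 2 (U.prod μ) := by
    refine MemLp.of_bound (hB.comp hF).ennreal_toReal.aestronglyMeasurable 1
      (ae_of_all _ fun p => ?_)
    rw [Real.norm_of_nonneg ENNReal.toReal_nonneg]
    exact ENNReal.toReal_le_of_le_ofReal zero_le_one (ENNReal.ofReal_one ▸ prob_le_one)
  have hBB : Measurable fun w => (B w).toReal * (B w).toReal :=
    hB.ennreal_toReal.mul hB.ennreal_toReal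
  have hact : ∫ p, (B (ρ p.1 p.2)).toReal * (B (ρ p.1 p.2)).toReal ∂(U.prod μ)
      = ∫ w, (B w).toReal * (B w).toReal ∂μ := by
    have h := integral_map (μ := U.prod μ) hρ.aemeasurable hBB.aestronglyMeasurable
    rw [map_uncurry_prod_eq hρ hμ] at h
    exact h.symm
  have hsnd : ∫ p, (B p.2).toReal * (B p.2).toReal ∂(U.prod μ)
      = ∫ w, (B w).toReal * (B w).toReal ∂μ := by
    rw [integral_fun_snd (fun w => (B w).toReal * (B w).toReal), probReal_univ,
      one_smul]
  have hcross : ∫ p, (B (ρ p.1 p.2)).toReal * (B p.2).toReal ∂(U.prod μ)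
      = ∫ w, (B w).toReal * (B w).toReal ∂μ := by
    rw [integral_prod_symm (fun p => (B (ρ p.1 p.2)).toReal * (B p.2).toReal)
      ((hmemLp hρ).integrable_mul (hmemLp measurable_snd))]
    congr with w
    dsimp only
    have hBw : Measurable fun g => B (ρ g w) := hB.comp hρ.of_uncurry_right
    rw [integral_mul_const, integral_toReal hBw.aemeasurable
      (ae_of_all _ fun g => prob_le_one.trans_lt ENNReal.one_lt_top),
      lintegral_orbitProb_act hρ hρ_mul hC]
  filter_upwards [ae_eq_of_integral_mul_self_eq (hmemLp hρ) (hmemLp measurable_snd)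
    (hact.trans hcross.symm) (hsnd.trans hcross.symm)] with p hp
  exact (ENNReal.toReal_eq_toReal_iff' (measure_ne_top _ _) (measure_ne_top _ _)).1 hp

lemma map_orbitSample_pi {M : ℕ} {C : Fin (M + 1) → Set 𝒳} (hC : ∀ k, MeasurableSet (C k)) :
    (((Measure.pi fun _ : Fin M => U).prod μ).map (orbitSample ρ)) (Set.univ.pi C)
      = ∫⁻ w, ∏ k, orbitProb U ρ (C k) w ∂μ := by
  have hfiber (w : 𝒳) : (Measure.pi fun _ : Fin M => U)
      ((fun gs => (gs, w)) ⁻¹' (orbitSample ρ ⁻¹' Set.univ.pi C))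
        = (C 0).indicator 1 w * ∏ i : Fin M, orbitProb U ρ (C i.succ) w := by
    by_cases hw : w ∈ C 0
    · have hset : (fun gs => (gs, w)) ⁻¹' (orbitSample ρ ⁻¹' Set.univ.pi C)
          = Set.univ.pi fun i => {g | ρ g w ∈ C i.succ} := by
        ext gs
        simp [orbitSample, Fin.forall_fin_succ, hw]
      simp [hset, hw, orbitProb]
    · have hset : (fun gs => (gs, w)) ⁻¹' (orbitSample ρ ⁻¹' Set.univ.pi C) = ∅ := by
        ext gs
        simp [orbitSample, Fin.forall_fin_succ, hw]
      simp [hset, hw]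
  rw [Measure.map_apply (measurable_orbitSample hρ) (.univ_pi hC),
    Measure.prod_apply_symm (measurable_orbitSample hρ (.univ_pi hC))]
  simp_rw [hfiber, Fin.prod_univ_succ]
  exact lintegral_indicator_mul_eq_lintegral_orbitProb_mul hρ hμ (hC 0)
    (Finset.measurable_prod _ fun i _ => measurable_orbitProb hρ (hC i.succ))
    (by
      filter_upwards [ae_all_iff.2 fun i => ae_orbitProb_act_eq hρ hρ_mul hμ (hC (Fin.succ i))]
        with p hp
      simp only [hp])

lemma isExchangeable_map_orbitSample {M : ℕ} :
    IsExchangeable (((Measure.pi fun _ : Fin M => U).prod μ).map (orbitSample ρ)) := by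
  intro σ
  have hσ : Measurable fun x : Fin (M + 1) → 𝒳 => x ∘ σ := by fun_prop
  refine ext_of_generate_finite _ generateFrom_pi.symm isPiSystem_pi ?_ (by simp [hσ])
  rintro _ ⟨C, hC, rfl⟩
  have hC' (k : Fin (M + 1)) : MeasurableSet (C k) := hC k (Set.mem_univ k)
  have hpre : (fun x : Fin (M + 1) → 𝒳 => x ∘ σ) ⁻¹' Set.univ.pi C
      = Set.univ.pi fun k => C (σ.symm k) := by
    ext x
    simp only [Set.mem_preimage, Set.mem_univ_pi, Function.comp_apply]
    exact ⟨fun h k => by simpa using h (σ.symm k), fun h k => by simpa using h (σ k)⟩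
  rw [Measure.map_apply hσ (.univ_pi hC'), hpre, map_orbitSample_pi hρ hρ_mul hμ hC',
    map_orbitSample_pi hρ hρ_mul hμ fun k => hC' (σ.symm k)]
  congr with w
  exact Equiv.prod_comp σ.symm fun k => orbitProb U ρ (C k) w

end OrbitSample

lemma map_eq_map_uncurry_prod_of_equivariant {Ω 𝒢 𝒵 𝒵t : Type*} [MeasurableSpace Ω]
    [MeasurableSpace 𝒢] [MeasurableSpace 𝒵] [MeasurableSpace 𝒵t] {P : Measure Ω}
    [IsFiniteMeasure P] {ρ : 𝒢 → 𝒵 → 𝒵} (hρ : Measurable (Function.uncurry ρ))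
    {ρt : 𝒢 → 𝒵t → 𝒵t} (hρt : Measurable (Function.uncurry ρt))
    {V : 𝒵 → 𝒵t} (hV : Measurable V) {Zv : Ω → 𝒵} (hZ : Measurable Zv)
    {Gv : Ω → 𝒢} (hG : Measurable Gv) (hGZ : IndepFun Gv Zv P)
    (hinv : P.map (fun ω => ρ (Gv ω) (Zv ω)) = P.map Zv)
    (hequiv : P.map (fun ω => V (ρ (Gv ω) (Zv ω))) = P.map (fun ω => ρt (Gv ω) (V (Zv ω)))) :
    P.map (fun ω => V (Zv ω))
      = ((P.map Gv).prod (P.map fun ω => V (Zv ω))).map (Function.uncurry ρt) := by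
  have hpair : P.map (fun ω => (Gv ω, Zv ω)) = (P.map Gv).prod (P.map Zv) :=
    (indepFun_iff_map_prod_eq_prod_map_map hG.aemeasurable hZ.aemeasurable).1 hGZ
  have hρGZ : Measurable fun ω => ρ (Gv ω) (Zv ω) := hρ.comp (hG.prodMk hZ)
  have hVZ : (P.map Zv).map V = P.map fun ω => V (Zv ω) := Measure.map_map hV hZ
  calc P.map (fun ω => V (Zv ω)) = P.map (fun ω => V (ρ (Gv ω) (Zv ω))) := by
        rw [← hVZ, ← hinv, Measure.map_map hV hρGZ]
        rfl
    _ = (P.map fun ω => (Gv ω, Zv ω)).map (Function.uncurry ρt ∘ Prod.map id V) := by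
        rw [hequiv, Measure.map_map (hρt.comp (measurable_id.prodMap hV)) (hG.prodMk hZ)]
        rfl
    _ = ((P.map Gv).prod (P.map fun ω => V (Zv ω))).map (Function.uncurry ρt) := by
        rw [hpair, ← Measure.map_map hρt (measurable_id.prodMap hV),
          ← Measure.map_prod_map _ _ measurable_id hV, Measure.map_id, hVZ]

lemma map_orbitSample_eq {Ω 𝒢 𝒳 : Type*} [MeasurableSpace Ω] [MeasurableSpace 𝒢]
    [MeasurableSpace 𝒳] {P : Measure Ω} [IsProbabilityMeasure P] {U : Measure 𝒢}
    {ρ : 𝒢 → 𝒳 → 𝒳} (hρ : Measurable (Function.uncurry ρ)) {W : Ω → 𝒳} (hW : Measurable W)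
    {M : ℕ} {Gs : Fin M → Ω → 𝒢} (hGs : ∀ i, Measurable (Gs i))
    (hGs_law : ∀ i, P.map (Gs i) = U) (hGs_iid : iIndepFun Gs P)
    (hGsW : IndepFun (fun ω i => Gs i ω) W P) :
    P.map (fun ω => orbitSample ρ ((fun i => Gs i ω), W ω))
      = ((Measure.pi fun _ => U).prod (P.map W)).map (orbitSample ρ) := by
  have hGs_tuple : P.map (fun ω i => Gs i ω) = Measure.pi fun _ => U := by
    rw [(iIndepFun_iff_map_fun_eq_pi_map fun i => (hGs i).aemeasurable).1 hGs_iid]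
    simp only [hGs_law]
  rw [← hGs_tuple, ← (indepFun_iff_map_prod_eq_prod_map_map (by fun_prop) hW.aemeasurable).1 hGsW,
    Measure.map_map (measurable_orbitSample hρ) (by fun_prop)]
  rfl

theorem stmt10_general
    {Ω 𝒢 𝒵 𝒵t : Type*} [MeasurableSpace Ω] [MeasurableSpace 𝒢] [MeasurableSpace 𝒵]
    [MeasurableSpace 𝒵t]
    [Group 𝒢] [TopologicalSpace 𝒢] [IsTopologicalGroup 𝒢]
    [BorelSpace 𝒢]
    (P : Measure Ω) [IsProbabilityMeasure P]
    (U : Measure 𝒢) [IsProbabilityMeasure U]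
    (hU : ∀ g : 𝒢, Measure.map (fun h => g * h) U = U)
    (ρ : 𝒢 → 𝒵 → 𝒵)
    (hρ_meas : Measurable (fun p : 𝒢 × 𝒵 => ρ p.1 p.2))
    (ρt : 𝒢 → 𝒵t → 𝒵t)
    (hρt_mul : ∀ g g' : 𝒢, ρt (g * g') = ρt g ∘ ρt g')
    (hρt_meas : Measurable (fun p : 𝒢 × 𝒵t => ρt p.1 p.2))
    (V : 𝒵 → 𝒵t) (hV : Measurable V)
    (ψ : 𝒵t → ℝ) (hψ : Measurable ψ)
    (α : ℝ) (hα : α ∈ Set.Icc (0 : ℝ) 1)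
    (Zv : Ω → 𝒵) (hZ : Measurable Zv)
    -- `G ~ U` independent of `Z`, witnessing the distributional invariance/equivariance
    (Gv : Ω → 𝒢) (hG : Measurable Gv)
    (hGlaw : Measure.map Gv P = U)
    (hGindep : IndepFun Gv Zv P)
    (hinv : Measure.map (fun ω => ρ (Gv ω) (Zv ω)) P = Measure.map Zv P)
    (hequiv : Measure.map (fun ω => V (ρ (Gv ω) (Zv ω))) P
        = Measure.map (fun ω => ρt (Gv ω) (V (Zv ω))) P)
    -- the Monte Carlo sample `G_1, …, G_M`: i.i.d. with law `U`, independent of `Z`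
    (M : ℕ) (Gs : Fin M → Ω → 𝒢) (hGs : ∀ i, Measurable (Gs i))
    (hGslaw : ∀ i, Measure.map (Gs i) P = U)
    (hGsiid : iIndepFun Gs P)
    (hGsindepZ : IndepFun (fun ω => fun i : Fin M => Gs i ω) Zv P) :
    1 - α ≤ (P {ω | ψ (V (Zv ω)) ≤
        empQuantile α (Fin.cons (ψ (V (Zv ω)))
          (fun i : Fin M => ψ (ρt (Gs i ω) (V (Zv ω)))))}).toReal := by
  have : U.IsMulLeftInvariant := ⟨hU⟩
  have hlaw := map_eq_map_uncurry_prod_of_equivariant hρ_meas hρt_meas hV hZ hG hGindep hinv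
    hequiv
  rw [hGlaw] at hlaw
  have hlaw_inv (a : 𝒢) : (P.map fun ω => V (Zv ω)).map (ρt a) = P.map fun ω => V (Zv ω) := by
    rw [hlaw]
    exact map_map_uncurry_prod hρt_meas hρt_mul a
  set Y : Ω → Fin (M + 1) → 𝒵t := fun ω => orbitSample ρt ((fun i => Gs i ω), V (Zv ω))
  have hY : Measurable Y := (measurable_orbitSample hρt_meas).comp (by fun_prop)
  have hY_law : P.map Y = _ := map_orbitSample_eq hρt_meas (hV.comp hZ) hGs hGslaw hGsiid
    (hGsindepZ.comp measurable_id hV)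
  have hψY : (fun ω => Fin.cons (ψ (V (Zv ω))) fun i => ψ (ρt (Gs i ω) (V (Zv ω))))
      = (ψ ∘ ·) ∘ Y := funext fun ω => (Fin.comp_cons ψ _ _).symm
  refine one_sub_le_prob_le_empQuantile (P := P)
    (hψY ▸ (by fun_prop : Measurable fun v : Fin (M + 1) → 𝒵t => ψ ∘ v).comp hY) ?_ hα.1 0
  rw [hψY, ← Measure.map_map (by fun_prop) hY, hY_law]
  exact (isExchangeable_map_orbitSample hρt_meas hρt_mul hlaw_inv).map_comp hψ

/-- validity of the Monte Carlo SymmPI quantile: if `Z` is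
𝒢-distributionally invariant, `V` is 𝒢-distributionally equivariant, and
`G_1, …, G_M` are i.i.d. `~ U` independent of `Z`, then with
`t̃_{z̃} := Q_{1−α}(ψ(z̃), ψ(ρ̃(G_1)z̃), …, ψ(ρ̃(G_M)z̃))` we have
`P(ψ(V(Z)) ≤ t̃_{V(Z)}) ≥ 1 − α`. -/
theorem stmt10
    {Ω 𝒢 𝒵 𝒵t : Type*} [MeasurableSpace Ω] [MeasurableSpace 𝒢] [MeasurableSpace 𝒵]
    [MeasurableSpace 𝒵t]
    [Group 𝒢] [TopologicalSpace 𝒢] [IsTopologicalGroup 𝒢] [CompactSpace 𝒢] [T2Space 𝒢]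
    [BorelSpace 𝒢]
    (P : Measure Ω) [IsProbabilityMeasure P]
    (U : Measure 𝒢) [IsProbabilityMeasure U]
    (hU : ∀ g : 𝒢, Measure.map (fun h => g * h) U = U)
    (ρ : 𝒢 → 𝒵 → 𝒵)
    (hρ_one : ρ 1 = id)
    (hρ_mul : ∀ g g' : 𝒢, ρ (g * g') = ρ g ∘ ρ g')
    (hρ_meas : Measurable (fun p : 𝒢 × 𝒵 => ρ p.1 p.2))
    (ρt : 𝒢 → 𝒵t → 𝒵t)
    (hρt_one : ρt 1 = id)
    (hρt_mul : ∀ g g' : 𝒢, ρt (g * g') = ρt g ∘ ρt g')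
    (hρt_meas : Measurable (fun p : 𝒢 × 𝒵t => ρt p.1 p.2))
    (V : 𝒵 → 𝒵t) (hV : Measurable V)
    (ψ : 𝒵t → ℝ) (hψ : Measurable ψ)
    (hψρ : Measurable (fun p : 𝒢 × 𝒵t => ψ (ρt p.1 p.2)))
    (α : ℝ) (hα : α ∈ Set.Icc (0 : ℝ) 1)
    (Zv : Ω → 𝒵) (hZ : Measurable Zv)
    -- `G ~ U` independent of `Z`, witnessing the distributional invariance/equivariance
    (Gv : Ω → 𝒢) (hG : Measurable Gv)
    (hGlaw : Measure.map Gv P = U)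
    (hGindep : IndepFun Gv Zv P)
    (hinv : Measure.map (fun ω => ρ (Gv ω) (Zv ω)) P = Measure.map Zv P)
    (hequiv : Measure.map (fun ω => V (ρ (Gv ω) (Zv ω))) P
        = Measure.map (fun ω => ρt (Gv ω) (V (Zv ω))) P)
    -- the Monte Carlo sample `G_1, …, G_M`: i.i.d. with law `U`, independent of `Z`
    (M : ℕ) (Gs : Fin M → Ω → 𝒢) (hGs : ∀ i, Measurable (Gs i))
    (hGslaw : ∀ i, Measure.map (Gs i) P = U)
    (hGsiid : iIndepFun Gs P)
    (hGsindepZ : IndepFun (fun ω => fun i : Fin M => Gs i ω) Zv P) :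
    1 - α ≤ (P {ω | ψ (V (Zv ω)) ≤
        empQuantile α (Fin.cons (ψ (V (Zv ω)))
          (fun i : Fin M => ψ (ρt (Gs i ω) (V (Zv ω)))))}).toReal :=
  stmt10_general P U hU ρ hρ_meas ρt hρt_mul hρt_meas V hV ψ hψ α hα Zv hZ Gv hG hGlaw hGindep hinv
    hequiv M Gs hGs hGslaw hGsiid hGsindepZ
end

section
/- (Fiber characterization of distributional equivariance on orbits, finite groups.) Let 𝒢 be a finite group acting on sets 𝒵 (via ρ) and 𝒵̃ (via ρ̃). Fix z ∈ 𝒵 and z̃ ∈ 𝒵̃, let O_z := {ρ(g)z : g ∈ 𝒢} and Õ_{z̃} := {ρ̃(g)z̃ : g ∈ 𝒢} be their orbits, and let V : O_z → Õ_{z̃} be a map with V(z) = z̃. Let G be uniformly distributed on 𝒢. Then V(ρ(G)z) =_d ρ̃(G)z̃ if and only if the fiber cardinality |V^{-1}({ρ̃(g)z̃})| is the same for all g ∈ 𝒢, in which case this common cardinality equals |Stab_ρ̃(z̃)|/|Stab_ρ(z)|, where Stab_ρ(z) := {g ∈ 𝒢 : ρ(g)z = z} and Stab_ρ̃(z̃)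 := {g ∈ 𝒢 : ρ̃(g)z̃ = z̃}. -/
/-!
Equality of the two pushforwards of the uniform measure is equality of the fiber counts
`#{g | V (g • z) = t}` and `#{g | g • z̃ = t}`. The fibers of the orbit map `g ↦ g • z` are
cosets of `Stab z`, so the first count is `|O_z ∩ V⁻¹ {t}| * |Stab z|`, and the second is
`|Stab z̃|` on the orbit of `z̃` and `0` off it. Conversely, if all fibers of `V` over `Õ_z̃` have
the same size `c`, then `|O_z| = c * |Õ_z̃|`, and orbit–stabilizer turns this into
`c * |Stab z| = |Stab z̃|`.
-/
open Set MulAction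
open scoped Pointwise ENNReal
open PMF (uniformOfFintype)

namespace Set

variable {α β : Type*}

theorem ncard_eq_ncard_mul_of_ncard_fiber_eq {f : α → β} {s : Set α} {t : Set β} {c : ℕ}
    (hs : s.Finite) (ht : t.Finite) (hf : MapsTo f s t)
    (hc : ∀ b ∈ t, (s ∩ f ⁻¹' {b}).ncard = c) : s.ncard = t.ncard * c := by
  have hs_eq : s = ⋃ b ∈ t, s ∩ f ⁻¹' {b} := by
    rw [← inter_iUnion₂, biUnion_preimage_singleton]
    exact (inter_eq_left.2 hf).symm
  calc s.ncard = (⋃ b ∈ t, s ∩ f ⁻¹' {b}).ncard := congrArg ncard hs_eq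
    _ = ∑ᶠ b ∈ t, (s ∩ f ⁻¹' {b}).ncard := ht.ncard_biUnion (fun _ _ => hs.inter_of_left _)
          ((pairwiseDisjoint_fiber f t).mono fun _ => inter_subset_right)
    _ = ∑ᶠ _ ∈ t, c := finsum_mem_congr rfl hc
    _ = t.ncard * c := by rw [← finsum_one, finsum_mem_mul]; simp only [one_mul]

end Set

namespace PMF

variable {α β : Type*} [Fintype α] [Nonempty α]

theorem map_uniformOfFintype_apply (f : α → β) (b : β) :
    (uniformOfFintype α).map f b = (f ⁻¹' {b}).ncard / Fintype.card α := by
  classical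
  rw [← toOuterMeasure_apply_singleton, toOuterMeasure_map_apply,
    toOuterMeasure_uniformOfFintype_apply, ← Nat.card_eq_fintype_card, Nat.card_coe_set_eq]

theorem map_uniformOfFintype_eq_iff {f f' : α → β} :
    (uniformOfFintype α).map f = (uniformOfFintype α).map f' ↔
      ∀ b, (f ⁻¹' {b}).ncard = (f' ⁻¹' {b}).ncard := by
  have h0 : (Fintype.card α : ℝ≥0∞) ≠ 0 := Nat.cast_ne_zero.2 Fintype.card_ne_zero
  have htop : (Fintype.card α : ℝ≥0∞) ≠ ∞ := ENNReal.natCast_ne_top _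
  simp only [PMF.ext_iff, map_uniformOfFintype_apply, ENNReal.div_eq_div_iff h0 htop h0 htop,
    ENNReal.mul_right_inj h0 htop, Nat.cast_inj]

end PMF

namespace MulAction

variable {G X Y : Type*} [Group G] [MulAction G X] [MulAction G Y]

abbrev ofFun (ρ : G → X → X) (h_one : ρ 1 = id) (h_mul : ∀ g g', ρ (g * g') = ρ g ∘ ρ g') :
    MulAction G X where
  smul := ρ
  one_smul := congrFun h_one
  mul_smul g g' := congrFun (h_mul g g')

theorem ncard_preimage_smul_singleton (x : X) (g₀ : G) :
    ((· • x) ⁻¹' {g₀ • x} : Set G).ncard = Nat.card (stabilizer G x) := by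
  have : ((· • x) ⁻¹' {g₀ • x} : Set G) = g₀ • (stabilizer G x : Set G) := by
    ext g
    simp [mem_smul_set_iff_inv_smul_mem, mul_smul, inv_smul_eq_iff]
  rw [this, ncard_smul_set]
  rfl

theorem ncard_preimage_smul [Finite G] (x : X) (S : Set X) :
    ((· • x) ⁻¹' S : Set G).ncard = (orbit G x ∩ S).ncard * Nat.card (stabilizer G x) := by
  refine ncard_eq_ncard_mul_of_ncard_fiber_eq (toFinite _) ((finite_range _).inter_of_left S)
    (fun g hg => ⟨mem_orbit x g, hg⟩) ?_
  rintro _ ⟨⟨g₀, rfl⟩, hS⟩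
  rw [inter_eq_right.2 (preimage_mono (singleton_subset_iff.2 hS))]
  exact ncard_preimage_smul_singleton x g₀

section Fiber

variable {x : X} {y : Y} {V : X → Y}

theorem ncard_fiber_mul_card_stabilizer_of_ncard_fiber_eq [Finite G]
    (hV : MapsTo V (orbit G x) (orbit G y))
    (h : ∀ g g' : G, (orbit G x ∩ V ⁻¹' {g • y}).ncard = (orbit G x ∩ V ⁻¹' {g' • y}).ncard) :
    (orbit G x ∩ V ⁻¹' {y}).ncard * Nat.card (stabilizer G x) = Nat.card (stabilizer G y) := by
  have hpart : (orbit G x).ncard = (orbit G y).ncard * (orbit G x ∩ V ⁻¹' {y}).ncard :=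
    ncard_eq_ncard_mul_of_ncard_fiber_eq (finite_range _) (finite_range _) hV (by
      rintro _ ⟨g, rfl⟩
      simpa using h g 1)
  have hpos : 0 < (orbit G y).ncard := (ncard_pos (finite_range _)).2 ⟨y, mem_orbit_self y⟩
  refine Nat.eq_of_mul_eq_mul_left hpos ?_
  rw [← mul_assoc, ← hpart, ← index_stabilizer, ← index_stabilizer, Subgroup.index_mul_card,
    Subgroup.index_mul_card]

variable [Fintype G]

theorem ncard_fiber_mul_card_stabilizer_of_map_eq
    (h : (uniformOfFintype G).map (fun g => V (g • x)) = (uniformOfFintype G).map (· • y))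
    (g : G) :
    (orbit G x ∩ V ⁻¹' {g • y}).ncard * Nat.card (stabilizer G x) = Nat.card (stabilizer G y) := by
  rw [← ncard_preimage_smul_singleton y g, ← PMF.map_uniformOfFintype_eq_iff.1 h]
  exact (ncard_preimage_smul x _).symm

theorem map_uniformOfFintype_eq_of_ncard_fiber_eq (hV : MapsTo V (orbit G x) (orbit G y))
    (h : ∀ g g' : G, (orbit G x ∩ V ⁻¹' {g • y}).ncard = (orbit G x ∩ V ⁻¹' {g' • y}).ncard) :
    (uniformOfFintype G).map (fun g => V (g • x)) = (uniformOfFintype G).map (· • y) := by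
  refine PMF.map_uniformOfFintype_eq_iff.2 fun t => ?_
  rw [show (fun g : G => V (g • x)) ⁻¹' {t} = (· • x) ⁻¹' (V ⁻¹' {t}) from rfl,
    ncard_preimage_smul, ncard_preimage_smul]
  by_cases ht : t ∈ orbit G y
  · obtain ⟨g, rfl⟩ := ht
    rw [h g 1, one_smul, ncard_fiber_mul_card_stabilizer_of_ncard_fiber_eq hV h,
      inter_eq_right.2 (singleton_subset_iff.2 (mem_orbit y g)), ncard_singleton, one_mul]
  · have hx : orbit G x ∩ V ⁻¹' {t} = ∅ :=
      eq_empty_of_forall_notMem fun w ⟨hw, hwt⟩ => ht (hwt ▸ hV hw)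
    rw [hx, inter_singleton_eq_empty.2 ht]
    simp

theorem map_uniformOfFintype_eq_iff_ncard_fiber_eq (hV : MapsTo V (orbit G x) (orbit G y)) :
    (uniformOfFintype G).map (fun g => V (g • x)) = (uniformOfFintype G).map (· • y) ↔
      ∀ g g' : G, (orbit G x ∩ V ⁻¹' {g • y}).ncard = (orbit G x ∩ V ⁻¹' {g' • y}).ncard :=
  ⟨fun h g g' => Nat.eq_of_mul_eq_mul_right Nat.card_pos
      ((ncard_fiber_mul_card_stabilizer_of_map_eq h g).trans
        (ncard_fiber_mul_card_stabilizer_of_map_eq h g').symm),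
    map_uniformOfFintype_eq_of_ncard_fiber_eq hV⟩

theorem ncard_fiber_eq_div_of_map_eq
    (h : (uniformOfFintype G).map (fun g => V (g • x)) = (uniformOfFintype G).map (· • y))
    (g : G) :
    (orbit G x ∩ V ⁻¹' {g • y}).ncard = Nat.card (stabilizer G y) / Nat.card (stabilizer G x) :=
  (Nat.div_eq_of_eq_mul_left Nat.card_pos (ncard_fiber_mul_card_stabilizer_of_map_eq h g).symm).symm

end Fiber

end MulAction

theorem stmt15_general
    {𝒢 𝒵 𝒵t : Type*} [Group 𝒢] [Fintype 𝒢]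
    (ρ : 𝒢 → 𝒵 → 𝒵)
    (hρ_one : ρ 1 = id)
    (hρ_mul : ∀ g g' : 𝒢, ρ (g * g') = ρ g ∘ ρ g')
    (ρt : 𝒢 → 𝒵t → 𝒵t)
    (hρt_one : ρt 1 = id)
    (hρt_mul : ∀ g g' : 𝒢, ρt (g * g') = ρt g ∘ ρt g')
    (z : 𝒵) (zt : 𝒵t)
    -- `V` is a map from the orbit of `z` to the orbit of `z̃` with `V z = z̃`
    (V : 𝒵 → 𝒵t)
    (hVorb : ∀ w : 𝒵, (∃ g : 𝒢, ρ g z = w) → ∃ g : 𝒢, ρt g zt = V w) :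
    ((PMF.map (fun g : 𝒢 => V (ρ g z)) (PMF.uniformOfFintype 𝒢)
        = PMF.map (fun g : 𝒢 => ρt g zt) (PMF.uniformOfFintype 𝒢)) ↔
      (∀ g g' : 𝒢,
        {w : 𝒵 | (∃ g₀ : 𝒢, ρ g₀ z = w) ∧ V w = ρt g zt}.ncard
          = {w : 𝒵 | (∃ g₀ : 𝒢, ρ g₀ z = w) ∧ V w = ρt g' zt}.ncard)) ∧
    ((PMF.map (fun g : 𝒢 => V (ρ g z)) (PMF.uniformOfFintype 𝒢)
        = PMF.map (fun g : 𝒢 => ρt g zt) (PMF.uniformOfFintype 𝒢)) →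
      ∀ g : 𝒢,
        {w : 𝒵 | (∃ g₀ : 𝒢, ρ g₀ z = w) ∧ V w = ρt g zt}.ncard
          = {g' : 𝒢 | ρt g' zt = zt}.ncard / {g' : 𝒢 | ρ g' z = z}.ncard) := by
  let : MulAction 𝒢 𝒵 := .ofFun ρ hρ_one hρ_mul
  let : MulAction 𝒢 𝒵t := .ofFun ρt hρt_one hρt_mul
  -- With these actions the sets in the statement are, definitionally, the fibers
  -- `orbit 𝒢 z ∩ V ⁻¹' {g • zt}` and the stabilizers of `zt` and `z`.
  exact ⟨map_uniformOfFintype_eq_iff_ncard_fiber_eq (x := z) (y := zt) hVorb,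
    ncard_fiber_eq_div_of_map_eq (x := z) (y := zt) (V := V)⟩

/-- fiber characterization of distributional equivariance on orbits, finite
groups: for `V : O_z → Õ_{z̃}` with `V(z) = z̃` and `G` uniform on the finite group `𝒢`,
`V(ρ(G)z) =_d ρ̃(G)z̃` iff the fibers `V⁻¹({ρ̃(g)z̃})` all have the same cardinality, in
which case this common cardinality equals `|Stab_ρ̃(z̃)| / |Stab_ρ(z)|`. -/
theorem stmt15
    {𝒢 𝒵 𝒵t : Type*} [Group 𝒢] [Fintype 𝒢]
    (ρ : 𝒢 → 𝒵 → 𝒵)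
    (hρ_one : ρ 1 = id)
    (hρ_mul : ∀ g g' : 𝒢, ρ (g * g') = ρ g ∘ ρ g')
    (ρt : 𝒢 → 𝒵t → 𝒵t)
    (hρt_one : ρt 1 = id)
    (hρt_mul : ∀ g g' : 𝒢, ρt (g * g') = ρt g ∘ ρt g')
    (z : 𝒵) (zt : 𝒵t)
    -- `V` is a map from the orbit of `z` to the orbit of `z̃` with `V z = z̃`
    (V : 𝒵 → 𝒵t)
    (hVorb : ∀ w : 𝒵, (∃ g : 𝒢, ρ g z = w) → ∃ g : 𝒢, ρt g zt = V w)
    (hVz : V z = zt) :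
    ((PMF.map (fun g : 𝒢 => V (ρ g z)) (PMF.uniformOfFintype 𝒢)
        = PMF.map (fun g : 𝒢 => ρt g zt) (PMF.uniformOfFintype 𝒢)) ↔
      (∀ g g' : 𝒢,
        {w : 𝒵 | (∃ g₀ : 𝒢, ρ g₀ z = w) ∧ V w = ρt g zt}.ncard
          = {w : 𝒵 | (∃ g₀ : 𝒢, ρ g₀ z = w) ∧ V w = ρt g' zt}.ncard)) ∧
    ((PMF.map (fun g : 𝒢 => V (ρ g z)) (PMF.uniformOfFintype 𝒢)
        = PMF.map (fun g : 𝒢 => ρt g zt) (PMF.uniformOfFintype 𝒢)) →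
      ∀ g : 𝒢,
        {w : 𝒵 | (∃ g₀ : 𝒢, ρ g₀ z = w) ∧ V w = ρt g zt}.ncard
          = {g' : 𝒢 | ρt g' zt = zt}.ncard / {g' : 𝒢 | ρ g' z = z}.ncard) :=
  stmt15_general ρ hρ_one hρ_mul ρt hρt_one hρt_mul z zt V hVorb
end

section
/- (Existence of distributionally equivariant maps between orbits, finite groups.) Let 𝒢 be a finite group acting on sets 𝒵 via ρ and on 𝒵̃ via ρ̃, fix z ∈ 𝒵 and z̃ ∈ 𝒵̃ with orbits O_z and Õ_{z̃}, and let G be uniformly distributed on 𝒢. There exists a map V : O_z → Õ_{z̃} with V(z) = z̃ such that V(ρ(G)z) =_d ρ̃(G)z̃ if and only if |Stab_ρ(z)| divides |Stab_ρ̃(z̃)|, where Stab_ρ(z) := {g ∈ 𝒢 : ρ(g)z = z} and Stab_ρ̃(z̃) := {g ∈ 𝒢 : ρ̃(g)z̃ = z̃}. -/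
/-!
The orbit map `g ↦ g • x` has all fibres of size `|Stab x|`, so the law of `V (g • x)` gives
mass `#{w ∈ O_x | V w = y'} * |Stab x| / |G|` to `y'`, while `g • y` gives mass `|Stab y| / |G|`
to each point of `O_y`. Comparing at `y' = y` yields divisibility. Conversely, if
`|Stab y| = m * |Stab x|`, then `|O_x| = m * |O_y|` by orbit–stabilizer, and any map
`O_x → O_y` sending `x` to `y` whose fibres all have `m` points has the right law.
-/
open MulAction

theorem PMF.map_uniformOfFintype_apply_s18 {α β : Type*} [Fintype α] [Nonempty α] (f : α → β) (b : β) :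
    PMF.map f (PMF.uniformOfFintype α) b = Nat.card {a // f a = b} / Fintype.card α := by
  classical
  rw [← PMF.toOuterMeasure_apply_singleton, PMF.toOuterMeasure_map_apply,
    PMF.toOuterMeasure_uniformOfFintype_apply, Nat.card_eq_fintype_card]
  rfl

theorem PMF.map_uniformOfFintype_eq_map_iff {α β : Type*} [Fintype α] [Nonempty α]
    (f f' : α → β) :
    PMF.map f (PMF.uniformOfFintype α) = PMF.map f' (PMF.uniformOfFintype α) ↔
      ∀ b, Nat.card {a // f a = b} = Nat.card {a // f' a = b} := by
  have hcard : (Fintype.card α : ENNReal) ≠ 0 := by simp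
  simp only [PMF.ext_iff, PMF.map_uniformOfFintype_apply_s18,
    ENNReal.div_eq_div_iff hcard (ENNReal.natCast_ne_top _) hcard (ENNReal.natCast_ne_top _),
    ENNReal.mul_right_inj hcard (ENNReal.natCast_ne_top _), Nat.cast_inj]

theorem MulAction.card_subtype_smul_eq_mul {G X : Type*} [Group G] [MulAction G X] (x : X)
    (P : X → Prop) :
    Nat.card {g : G // P (g • x)} = Nat.card {w : orbit G x // P w} * Nat.card (stabilizer G x) :=
  calc Nat.card {g : G // P (g • x)}
      = Nat.card {p : orbit G x × stabilizer G x // P p.1} :=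
        Nat.card_congr ((orbitProdStabilizerEquivGroup G x).symm.subtypeEquiv fun _ => Iff.rfl)
    _ = _ := by
        rw [Nat.card_congr (Equiv.prodSubtypeFstEquivSubtypeProd (p := fun w : orbit G x => P w)),
          Nat.card_prod]

theorem exists_map_card_subtype_comp_eq_mul {A B : Type*} [Finite A] [Finite B] {m : ℕ}
    (hcard : Nat.card A = Nat.card B * m) (a₀ : A) (b₀ : B) :
    ∃ f : A → B, f a₀ = b₀ ∧ ∀ P : B → Prop, Nat.card {a // P (f a)} = Nat.card {b // P b} * m := by
  classical
  obtain ⟨e⟩ : Nonempty (A ≃ B × Fin m) := Finite.card_eq.1 (by simpa using hcard)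
  let σ := Equiv.swap (e a₀).1 b₀
  refine ⟨fun a => σ (e a).1, Equiv.swap_apply_left _ _, fun P => ?_⟩
  calc Nat.card {a // P (σ (e a).1)}
      = Nat.card {p : B × Fin m // P (σ p.1)} := Nat.card_congr (e.subtypeEquiv fun _ => Iff.rfl)
    _ = Nat.card {b // P (σ b)} * m := by
        rw [Nat.card_congr (Equiv.prodSubtypeFstEquivSubtypeProd (p := fun b => P (σ b))),
          Nat.card_prod, Nat.card_eq_fintype_card (α := Fin m), Fintype.card_fin]
    _ = Nat.card {b // P b} * m := by
        rw [Nat.card_congr (σ.subtypeEquiv fun _ => Iff.rfl)]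

theorem Set.card_subtype_coe_eq {X : Type*} {s : Set X} {x : X} (hx : x ∈ s) :
    Nat.card {w : s // (w : X) = x} = 1 :=
  Nat.card_eq_one_iff_exists.2 ⟨⟨⟨x, hx⟩, rfl⟩, fun w => Subtype.ext (Subtype.ext w.2)⟩

theorem MulAction.exists_map_orbit_map_uniformOfFintype_eq_iff {G X Y : Type*} [Group G]
    [Fintype G] [MulAction G X] [MulAction G Y] (x : X) (y : Y) :
    (∃ V : X → Y, (∀ w ∈ orbit G x, V w ∈ orbit G y) ∧ V x = y ∧
      PMF.map (fun g : G => V (g • x)) (PMF.uniformOfFintype G)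
        = PMF.map (fun g : G => g • y) (PMF.uniformOfFintype G)) ↔
      Nat.card (stabilizer G x) ∣ Nat.card (stabilizer G y) := by
  classical
  constructor
  · rintro ⟨V, -, -, hV⟩
    have hy := (PMF.map_uniformOfFintype_eq_map_iff _ _).1 hV y
    rw [card_subtype_smul_eq_mul x (V · = y), card_subtype_smul_eq_mul y (· = y),
      Set.card_subtype_coe_eq (mem_orbit_self y), one_mul] at hy
    exact Dvd.intro_left _ hy
  · rintro ⟨m, hm⟩
    have hcard : Nat.card (orbit G x) = Nat.card (orbit G y) * m := by
      have hx := (stabilizer G x).card_mul_index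
      have hy := (stabilizer G y).card_mul_index
      rw [index_stabilizer, ← Nat.card_coe_set_eq] at hx hy
      exact Nat.eq_of_mul_eq_mul_left Nat.card_pos (by rw [hx, ← hy, hm]; ring)
    have : Finite (orbit G x) := Set.finite_range _
    have : Finite (orbit G y) := Set.finite_range _
    obtain ⟨f, hf₀, hf⟩ :=
      exists_map_card_subtype_comp_eq_mul hcard ⟨x, mem_orbit_self x⟩ ⟨y, mem_orbit_self y⟩
    let V : X → Y := fun w => if h : w ∈ orbit G x then f ⟨w, h⟩ else y
    have hV (w : orbit G x) : V w = f w := dif_pos w.2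
    refine ⟨V, fun w hw => by simpa only [hV ⟨w, hw⟩] using (f ⟨w, hw⟩).2,
      by rw [hV ⟨x, mem_orbit_self x⟩, hf₀], ?_⟩
    refine (PMF.map_uniformOfFintype_eq_map_iff _ _).2 fun y' => ?_
    calc Nat.card {g : G // V (g • x) = y'}
        = Nat.card {w : orbit G x // V w = y'} * Nat.card (stabilizer G x) :=
          card_subtype_smul_eq_mul x (V · = y')
      _ = Nat.card {w : orbit G y // (w : Y) = y'} * m * Nat.card (stabilizer G x) := by
          simp only [hV, hf fun b => (b : Y) = y']
      _ = Nat.card {w : orbit G y // (w : Y) = y'} * Nat.card (stabilizer G y) := by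
          rw [hm]; ring
      _ = Nat.card {g : G // g • y = y'} := (card_subtype_smul_eq_mul y (· = y')).symm

/-- existence of distributionally equivariant maps between orbits, finite
groups: there exists a map `V : O_z → Õ_{z̃}` with `V(z) = z̃` and
`V(ρ(G)z) =_d ρ̃(G)z̃` for `G` uniform on `𝒢` iff `|Stab_ρ(z)|` divides `|Stab_ρ̃(z̃)|`. -/
theorem stmt18
    {𝒢 𝒵 𝒵t : Type*} [Group 𝒢] [Fintype 𝒢]
    (ρ : 𝒢 → 𝒵 → 𝒵)
    (hρ_one : ρ 1 = id)
    (hρ_mul : ∀ g g' : 𝒢, ρ (g * g') = ρ g ∘ ρ g')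
    (ρt : 𝒢 → 𝒵t → 𝒵t)
    (hρt_one : ρt 1 = id)
    (hρt_mul : ∀ g g' : 𝒢, ρt (g * g') = ρt g ∘ ρt g')
    (z : 𝒵) (zt : 𝒵t) :
    (∃ V : 𝒵 → 𝒵t,
      (∀ w : 𝒵, (∃ g : 𝒢, ρ g z = w) → ∃ g : 𝒢, ρt g zt = V w) ∧
      V z = zt ∧
      PMF.map (fun g : 𝒢 => V (ρ g z)) (PMF.uniformOfFintype 𝒢)
        = PMF.map (fun g : 𝒢 => ρt g zt) (PMF.uniformOfFintype 𝒢))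
    ↔ {g : 𝒢 | ρ g z = z}.ncard ∣ {g : 𝒢 | ρt g zt = zt}.ncard := by
  -- `Function.End` multiplies by composition, so `hρ_one`, `hρ_mul` make `ρ` a monoid hom.
  let _ : MulAction 𝒢 𝒵 := .ofEndHom ⟨⟨ρ, hρ_one⟩, hρ_mul⟩
  let _ : MulAction 𝒢 𝒵t := .ofEndHom ⟨⟨ρt, hρt_one⟩, hρt_mul⟩
  rw [← Nat.card_coe_set_eq, ← Nat.card_coe_set_eq]
  exact MulAction.exists_map_orbit_map_uniformOfFintype_eq_iff z zt
end
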